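/- arXiv:1508.05172 — 12 statements merged into one kernel-verified Lean document; each statement's English description precedes it below -/
import Mathlib

section
/- Assume additionally that the weight of the root of T is even. Then for every even vertex v of T, the integer l_v is odd if and only if v is not the root and the parent p_v of v is odd. In particular, l_v is even when v is the root. -/
open Finset

lemma cast_one_iff_odd (n : ℕ) : (n : ZMod 2) = 1 ↔ Odd n := by
  rw [Nat.odd_iff, ← ZMod.natCast_mod n 2]
  rcases Nat.mod_two_eq_zero_or_one n with h | h <;> simp [h]

/-- If the weight of the root is even, then for every even vertex `v`,
`l v` is odd iff `v` is not the root and the parent of `v` is odd. -/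
theorem stmt_0
    (V : Type) [Fintype V] [DecidableEq V]
    (root : V) (parent : V → V) (depth : V → ℕ)
    (hdepth_root : depth root = 0)
    (hdepth : ∀ v, v ≠ root → depth v = depth (parent v) + 1)
    (C : V → Finset V)
    (hC : ∀ v w, w ∈ C v ↔ w ≠ root ∧ parent w = v)
    (l' wt : V → ℕ)
    (hwt : ∀ v, wt v = l' v + ∑ w ∈ C v, wt w)
    (hwt2 : ∀ v, 2 ≤ wt v)
    (r s l : V → ℕ)
    (hr : ∀ v, r v = ((C v).filter fun w => Odd (wt w)).card)
    (hs : ∀ v, s v = ((C v).filter fun w => Even (wt w)).card)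
    (hl : ∀ v, l v = l' v + r v)
    (ε : V → ZMod 2)
    (hεroot : ε root = 0)
    (hε : ∀ w, w ≠ root → ε w = ε (parent w) + (wt w : ZMod 2))
    (hrootwt : Even (wt root)) :
    ∀ v, ε v = 0 → (Odd (l v) ↔ v ≠ root ∧ ε (parent v) = 1) := by
  have hlw : ∀ v, (l v : ZMod 2) = (wt v : ZMod 2) := by
    intro v
    rw [hl, hwt, Nat.cast_add, Nat.cast_add, Nat.cast_sum]
    congr 1
    rw [hr, Finset.card_filter, Nat.cast_sum]
    apply Finset.sum_congr rfl
    intro w _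
    rcases Nat.even_or_odd (wt w) with h | h
    · have h0 : (wt w : ZMod 2) = 0 :=
        (ZMod.natCast_eq_zero_iff _ _).mpr h.two_dvd
      simp [Nat.not_odd_iff_even.mpr h, h0]
    · simp [h, (cast_one_iff_odd (wt w)).mpr h]
  have hOdd : ∀ v, Odd (l v) ↔ (wt v : ZMod 2) = 1 := by
    intro v
    rw [← cast_one_iff_odd, hlw]
  intro v hv
  by_cases hvr : v = root
  · subst hvr
    simp only [ne_eq, not_true_eq_false, false_and, iff_false]
    rw [hOdd]
    intro h1
    exact (Nat.not_odd_iff_even.mpr hrootwt) ((cast_one_iff_odd _).mp h1)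
  · have h := hε v hvr
    rw [hv] at h
    have hneg : -(wt v : ZMod 2) = (wt v : ZMod 2) := CharTwo.neg_eq _
    have hp : ε (parent v) = (wt v : ZMod 2) := by
      rw [← hneg]; linear_combination -h
    rw [hOdd, ← hp]
    simp [hvr]
end

section
/- Assume additionally that the weight of the root of T is even. Then Σ_{v even} (l_v mod 2) = Σ_{v odd} r_v, where the first sum runs over the even vertices of T, the second over the odd vertices of T, and (l_v mod 2) denotes the element of {0,1} congruent to l_v modulo 2. Equivalently, Σ_{v even} −(l_v mod 2) + Σ_{v odd} r_v = 0. -/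
open Finset

theorem stmt_2
    (V : Type) [Fintype V] [DecidableEq V]
    (root : V) (parent : V → V) (depth : V → ℕ)
    (hdepth_root : depth root = 0)
    (hdepth : ∀ v, v ≠ root → depth v = depth (parent v) + 1)
    (C : V → Finset V)
    (hC : ∀ v w, w ∈ C v ↔ w ≠ root ∧ parent w = v)
    (l' wt : V → ℕ)
    (hwt : ∀ v, wt v = l' v + ∑ w ∈ C v, wt w)
    (hwt2 : ∀ v, 2 ≤ wt v)
    (r s l : V → ℕ)
    (hr : ∀ v, r v = ((C v).filter fun w => Odd (wt w)).card)
    (hs : ∀ v, s v = ((C v).filter fun w => Even (wt w)).card)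
    (hl : ∀ v, l v = l' v + r v)
    (ε : V → ZMod 2)
    (hεroot : ε root = 0)
    (hε : ∀ w, w ≠ root → ε w = ε (parent w) + (wt w : ZMod 2))
    (hrootwt : Even (wt root)) :
    ∑ v ∈ univ.filter (fun v => ε v = 0), (l v % 2)
      = ∑ v ∈ univ.filter (fun v => ε v = 1), r v := by
  classical
  have hcast : ∀ n : ℕ, (n : ZMod 2) = if Odd n then 1 else 0 := by
    intro n
    rw [← ZMod.natCast_mod]
    rcases Nat.even_or_odd n with h | h
    · rw [Nat.even_iff.mp h, if_neg (Nat.not_odd_iff_even.mpr h)]; rfl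
    · rw [Nat.odd_iff.mp h, if_pos h]; rfl
  -- l v ≡ wt v (mod 2)
  have hlwt : ∀ v, l v % 2 = wt v % 2 := by
    intro v
    have hz : (l v : ZMod 2) = (wt v : ZMod 2) := by
      rw [hl v, hwt v, hr v]
      push_cast
      congr 1
      rw [← Finset.sum_boole]
      exact (Finset.sum_congr rfl fun w _ => (hcast (wt w))).symm
    exact (ZMod.natCast_eq_natCast_iff _ _ _).mp hz
  set T : Finset V :=
    univ.filter (fun w => w ≠ root ∧ Odd (wt w) ∧ ε (parent w) = 1) with hT
  have hmod : ∀ n : ℕ, n % 2 = if Odd n then 1 else 0 := by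
    intro n
    rcases Nat.even_or_odd n with h | h
    · rw [Nat.even_iff.mp h, if_neg (Nat.not_odd_iff_even.mpr h)]
    · rw [Nat.odd_iff.mp h, if_pos h]
  -- LHS = T.card
  have hLHS : ∑ v ∈ univ.filter (fun v => ε v = 0), (l v % 2) = T.card := by
    have h1 : ∑ v ∈ univ.filter (fun v => ε v = 0), (l v % 2)
        = ∑ v ∈ univ.filter (fun v => ε v = 0), (if Odd (wt v) then 1 else 0) := by
      refine Finset.sum_congr rfl fun v _ => ?_
      rw [hlwt v, hmod]
    rw [h1, Finset.sum_boole, Finset.filter_filter]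
    norm_cast
    congr 1
    ext v
    simp only [hT, mem_filter, mem_univ, true_and]
    constructor
    · rintro ⟨h0, hodd⟩
      have hv : v ≠ root := by
        rintro rfl
        exact (Nat.not_odd_iff_even.mpr hrootwt) hodd
      refine ⟨hv, hodd, ?_⟩
      have he := hε v hv
      rw [hcast, if_pos hodd] at he
      have h2 : ∀ a : ZMod 2, a + 1 = 0 → a = 1 := by decide
      exact h2 _ (by rw [← he, h0])
    · rintro ⟨hv, hodd, hp⟩
      refine ⟨?_, hodd⟩
      rw [hε v hv, hcast, if_pos hodd, hp]
      decide
  -- RHS = T.card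
  have hRHS : ∑ v ∈ univ.filter (fun v => ε v = 1), r v = T.card := by
    have hdisj : ((univ.filter (fun v => ε v = 1) : Finset V) : Set V).PairwiseDisjoint C := by
      intro a _ b _ hab
      refine Finset.disjoint_left.mpr fun w hwa hwb => hab ?_
      rw [← ((hC a w).mp hwa).2, ← ((hC b w).mp hwb).2]
    have h1 : ∑ v ∈ univ.filter (fun v => ε v = 1), r v
        = ∑ v ∈ univ.filter (fun v => ε v = 1), ∑ w ∈ C v, (if Odd (wt w) then 1 else 0) := by
      refine Finset.sum_congr rfl fun v _ => ?_
      rw [hr v, Finset.card_filter]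
    rw [h1, ← Finset.sum_biUnion hdisj]
    have h2 : (univ.filter (fun v => ε v = 1)).biUnion C
        = univ.filter (fun w => w ≠ root ∧ ε (parent w) = 1) := by
      ext w
      simp only [mem_biUnion, mem_filter, mem_univ, true_and, hC]
      constructor
      · rintro ⟨v, hv1, hw2, rfl⟩
        exact ⟨hw2, hv1⟩
      · rintro ⟨hw2, hp⟩
        exact ⟨parent w, hp, hw2, rfl⟩
    rw [h2, Finset.sum_boole, Finset.filter_filter]
    norm_cast
    congr 1
    ext w
    simp only [hT, mem_filter, mem_univ, true_and]
    tauto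
  rw [hLHS, hRHS]
end

section
/- Assume additionally that the weight of the root of T is even. Then Σ_{v ∈ V} E(v) = 0. -/
open Finset

private def gAux {V : Type} [DecidableEq V] (parent : V → V) (ε : V → ZMod 2) (wt : V → ℕ) :
    V → ℤ := fun w =>
  (if ε (parent w) = 1 then 1 else 0) -
    (if ε w = 1 then 2 - (wt w : ℤ) * ((wt w : ℤ) - 1) else 0)

private def hAux {V : Type} [DecidableEq V] (parent : V → V) (ε : V → ZMod 2) (wt : V → ℕ)
    (l : V → ℕ) : V → ℤ := fun v =>
  if ε v = 1 then ((if ε (parent v) = 1 then (-1 : ℤ) else 0) + (2 - (wt v : ℤ) * ((wt v : ℤ) - 1)))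
  else -((l v % 2 : ℕ) : ℤ)

theorem stmt_4
    (V : Type) [Fintype V] [DecidableEq V]
    (root : V) (parent : V → V) (depth : V → ℕ)
    (hdepth_root : depth root = 0)
    (hdepth : ∀ v, v ≠ root → depth v = depth (parent v) + 1)
    (C : V → Finset V)
    (hC : ∀ v w, w ∈ C v ↔ w ≠ root ∧ parent w = v)
    (l' wt : V → ℕ)
    (hwt : ∀ v, wt v = l' v + ∑ w ∈ C v, wt w)
    (hwt2 : ∀ v, 2 ≤ wt v)
    (r s l : V → ℕ)
    (hr : ∀ v, r v = ((C v).filter fun w => Odd (wt w)).card)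
    (hs : ∀ v, s v = ((C v).filter fun w => Even (wt w)).card)
    (hl : ∀ v, l v = l' v + r v)
    (ε : V → ZMod 2)
    (hεroot : ε root = 0)
    (hε : ∀ w, w ≠ root → ε w = ε (parent w) + (wt w : ZMod 2))
    (E : V → ℤ)
    (hE_even : ∀ v, ε v = 0 → E v =
      -((l v % 2 : ℕ) : ℤ) -
        ∑ w ∈ (C v).filter (fun w => ε w = 1), (2 - (wt w : ℤ) * ((wt w : ℤ) - 1)))
    (hE_odd_evenpar : ∀ v, ε v = 1 → ε (parent v) = 0 → E v =
      (r v : ℤ) + (s v : ℤ) + 2 - (wt v : ℤ) * ((wt v : ℤ) - 1) -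
        ∑ w ∈ (C v).filter (fun w => ε w = 1), (2 - (wt w : ℤ) * ((wt w : ℤ) - 1)))
    (hE_odd_oddpar : ∀ v, ε v = 1 → ε (parent v) = 1 → E v =
      (r v : ℤ) + (s v : ℤ) + 1 - (wt v : ℤ) * ((wt v : ℤ) - 1) -
        ∑ w ∈ (C v).filter (fun w => ε w = 1), (2 - (wt w : ℤ) * ((wt w : ℤ) - 1)))
    (hrootwt : Even (wt root)) :
    ∑ v, E v = 0 := by
  classical
  have h2z : (2 : ZMod 2) = 0 := by decide
  have hzmod : ∀ x : ZMod 2, x ≠ 1 → x = 0 := by decide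
  have hzmod' : ∀ x : ZMod 2, x + 1 = 0 → x = 1 := by decide
  have hrootε : ¬ (ε root = 1) := by rw [hεroot]; decide
  -- nat cast to ZMod 2 as parity indicator
  have hnat : ∀ n : ℕ, (n : ZMod 2) = if Odd n then 1 else 0 := by
    intro n
    rcases Nat.even_or_odd n with h | h
    · obtain ⟨k, hk⟩ := h
      rw [if_neg (Nat.not_odd_iff_even.mpr ⟨k, hk⟩), hk]
      calc ((k + k : ℕ) : ZMod 2) = 2 * (k : ZMod 2) := by push_cast; ring
        _ = 0 := by rw [h2z, zero_mul]
    · obtain ⟨k, hk⟩ := h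
      rw [if_pos ⟨k, hk⟩, hk]
      calc ((2 * k + 1 : ℕ) : ZMod 2) = 2 * (k : ZMod 2) + 1 := by push_cast; ring
        _ = 1 := by rw [h2z, zero_mul, zero_add]
  -- l v and wt v have the same parity
  have hlwt : ∀ v, l v % 2 = wt v % 2 := by
    intro v
    have h1 : ((l v : ℕ) : ZMod 2) = ((wt v : ℕ) : ZMod 2) := by
      rw [hl v, hr v, hwt v, Finset.card_filter]
      push_cast
      congr 1
      refine Finset.sum_congr rfl fun w _ => ?_
      rw [hnat (wt w)]
    exact (ZMod.natCast_eq_natCast_iff _ _ _).mp h1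
  -- fiberwise summation over the parent map
  have hCrep : ∀ v : V, C v = (univ.filter (fun w => w ≠ root)).filter (fun w => parent w = v) := by
    intro v; ext w
    simp only [Finset.mem_filter, Finset.mem_univ, true_and, hC]
  have hfiber : ∀ F : V → ℤ,
      ∑ v, ∑ w ∈ C v, F w = ∑ w ∈ univ.filter (fun w => w ≠ root), F w := by
    intro F
    rw [← Finset.sum_fiberwise_of_maps_to (g := parent) (t := univ)
        (fun x _ => Finset.mem_univ _) F]
    exact Finset.sum_congr rfl fun v _ => by rw [hCrep v]
  -- r v + s v counts all children
  have hcard : ∀ v, (r v : ℤ) + (s v : ℤ) = ((C v).card : ℤ) := by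
    intro v
    have h1 : r v + s v = (C v).card := by
      rw [hr v, hs v]
      have h2 : (C v).filter (fun w => Even (wt w)) = (C v).filter (fun w => ¬ Odd (wt w)) :=
        Finset.filter_congr fun w _ => (Nat.not_odd_iff_even (n := wt w)).symm
      rw [h2]
      exact Finset.card_filter_add_card_filter_not (p := fun w => Odd (wt w))
    rw [← h1]; push_cast; ring
  -- decomposition of E
  have hEv : ∀ v, E v = (∑ w ∈ C v, gAux parent ε wt w) + hAux parent ε wt l v := by
    intro v
    have hsplit : ∑ w ∈ C v, gAux parent ε wt w =
        (∑ w ∈ C v, if ε (parent w) = 1 then (1 : ℤ) else 0)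
          - ∑ w ∈ (C v).filter (fun w => ε w = 1), (2 - (wt w : ℤ) * ((wt w : ℤ) - 1)) := by
      rw [Finset.sum_filter, ← Finset.sum_sub_distrib]
      simp only [gAux]
    have hpar : ∀ w ∈ C v, parent w = v := fun w hw => ((hC v w).mp hw).2
    by_cases h1 : ε v = 1
    · have hone : ∑ w ∈ C v, (if ε (parent w) = 1 then (1 : ℤ) else 0) = ((C v).card : ℤ) := by
        rw [Finset.sum_congr rfl (fun w hw => by rw [hpar w hw, if_pos h1])]
        simp
      by_cases h2 : ε (parent v) = 1
      · rw [hE_odd_oddpar v h1 h2, hsplit, hone, ← hcard v]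
        simp only [hAux, if_pos h1, if_pos h2]
        ring
      · rw [hE_odd_evenpar v h1 (hzmod _ h2), hsplit, hone, ← hcard v]
        simp only [hAux, if_pos h1, if_neg h2]
        ring
    · have hzero : ∑ w ∈ C v, (if ε (parent w) = 1 then (1 : ℤ) else 0) = 0 :=
        Finset.sum_eq_zero fun w hw => by rw [hpar w hw, if_neg h1]
      rw [hE_even v (hzmod _ h1), hsplit, hzero]
      simp only [hAux, if_neg h1]
      ring
  -- the pointwise cancellation
  have hpoint : ∀ w, (if w ≠ root then gAux parent ε wt w else 0) + hAux parent ε wt l w = 0 := by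
    intro w
    rcases eq_or_ne w root with hw | hw
    · rw [hw, if_neg (by simp)]
      simp only [hAux, if_neg hrootε]
      have h0 : l root % 2 = 0 := by rw [hlwt]; exact Nat.even_iff.mp hrootwt
      rw [h0]
      norm_num
    · rw [if_pos hw]
      by_cases h1 : ε w = 1
      · simp only [gAux, hAux, if_pos h1]
        by_cases h2 : ε (parent w) = 1
        · simp only [if_pos h2]; ring
        · simp only [if_neg h2]; ring
      · have heq : ε (parent w) + (wt w : ZMod 2) = 0 := by
          rw [← hε w hw]; exact hzmod _ h1
        simp only [gAux, hAux, if_neg h1]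
        rcases Nat.even_or_odd (wt w) with he | ho
        · have hwt0 : ((wt w : ℕ) : ZMod 2) = 0 := by
            rw [hnat, if_neg (Nat.not_odd_iff_even.mpr he)]
          have hp0 : ε (parent w) = 0 := by rwa [hwt0, add_zero] at heq
          have hp1 : ¬ (ε (parent w) = 1) := by rw [hp0]; decide
          have hl0 : l w % 2 = 0 := by rw [hlwt]; exact Nat.even_iff.mp he
          rw [if_neg hp1, hl0]
          norm_num
        · have hwt1 : ((wt w : ℕ) : ZMod 2) = 1 := by rw [hnat, if_pos ho]
          have hp1 : ε (parent w) = 1 := by rw [hwt1] at heq; exact hzmod' _ heq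
          have hl1 : l w % 2 = 1 := by rw [hlwt]; exact Nat.odd_iff.mp ho
          rw [if_pos hp1, hl1]
          norm_num
  calc ∑ v, E v
      = ∑ v, ((∑ w ∈ C v, gAux parent ε wt w) + hAux parent ε wt l v) :=
        Finset.sum_congr rfl fun v _ => hEv v
    _ = (∑ v, ∑ w ∈ C v, gAux parent ε wt w) + ∑ v, hAux parent ε wt l v :=
        Finset.sum_add_distrib
    _ = (∑ w ∈ univ.filter (fun w => w ≠ root), gAux parent ε wt w)
          + ∑ v, hAux parent ε wt l v := by rw [hfiber]
    _ = ∑ w, ((if w ≠ root then gAux parent ε wt w else 0) + hAux parent ε wt l w) := by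
        rw [Finset.sum_filter, ← Finset.sum_add_distrib]
    _ = ∑ _w : V, (0 : ℤ) := Finset.sum_congr rfl fun w _ => hpoint w
    _ = 0 := Finset.sum_const_zero
end

section
/- Let w be a vertex of T with wt_w = 2. Then every vertex u of the complete subtree T_w satisfies wt_u = 2 and has at most one child (so T_w is a chain). If moreover w is odd, then every vertex of T_w is odd. -/
open Finset

/-- `u` belongs to the complete subtree rooted at `w` (i.e. `u` is `w` or a descendant
of `w`): iterating `parent` from `u` reaches `w` without passing through the root first. -/
def Desc {V : Type} (root : V) (parent : V → V) (w u : V) : Prop :=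
  ∃ n : ℕ, parent^[n] u = w ∧ ∀ m, m < n → parent^[m] u ≠ root

theorem stmt_5
    (V : Type) [Fintype V] [DecidableEq V]
    (root : V) (parent : V → V) (depth : V → ℕ)
    (hdepth_root : depth root = 0)
    (hdepth : ∀ v, v ≠ root → depth v = depth (parent v) + 1)
    (C : V → Finset V)
    (hC : ∀ v w, w ∈ C v ↔ w ≠ root ∧ parent w = v)
    (l' wt : V → ℕ)
    (hwt : ∀ v, wt v = l' v + ∑ w ∈ C v, wt w)
    (hwt2 : ∀ v, 2 ≤ wt v)
    (r s l : V → ℕ)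
    (hr : ∀ v, r v = ((C v).filter fun w => Odd (wt w)).card)
    (hs : ∀ v, s v = ((C v).filter fun w => Even (wt w)).card)
    (hl : ∀ v, l v = l' v + r v)
    (ε : V → ZMod 2)
    (hεroot : ε root = 0)
    (hε : ∀ w, w ≠ root → ε w = ε (parent w) + (wt w : ZMod 2))
    (w : V) (hw : wt w = 2) :
    ∀ u, Desc root parent w u →
      wt u = 2 ∧ (C u).card ≤ 1 ∧ (ε w = 1 → ε u = 1) := by
  have hcard : ∀ v, wt v = 2 → (C v).card ≤ 1 := by
    intro v hv
    have h1 : (C v).card * 2 ≤ ∑ x ∈ C v, wt x := by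
      calc (C v).card * 2 = ∑ _x ∈ C v, 2 := by rw [Finset.sum_const, smul_eq_mul]
        _ ≤ ∑ x ∈ C v, wt x := Finset.sum_le_sum fun i _ => hwt2 i
    have h2 := hwt v
    omega
  rintro u ⟨n, hn, hm⟩
  suffices h : wt u = 2 ∧ ε u = ε w by
    exact ⟨h.1, hcard u h.1, fun hw1 => h.2 ▸ hw1⟩
  induction n generalizing u with
  | zero => simp only [Function.iterate_zero_apply] at hn; subst hn; exact ⟨hw, rfl⟩
  | succ n ih =>
    have hu_ne : u ≠ root := hm 0 (Nat.succ_pos n)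
    have hp : parent^[n] (parent u) = w := by rwa [← Function.iterate_succ_apply]
    have hmp : ∀ m, m < n → parent^[m] (parent u) ≠ root := fun m hm' => by
      rw [← Function.iterate_succ_apply]; exact hm (m + 1) (Nat.succ_lt_succ hm')
    obtain ⟨hwp, hεp⟩ := ih (parent u) hp hmp
    have huC : u ∈ C (parent u) := (hC _ u).mpr ⟨hu_ne, rfl⟩
    have hsum : wt u ≤ ∑ x ∈ C (parent u), wt x :=
      Finset.single_le_sum (fun i _ => Nat.zero_le _) huC
    have h2 := hwt (parent u)
    have hwu : wt u = 2 := by have := hwt2 u; omega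
    refine ⟨hwu, ?_⟩
    rw [hε u hu_ne, hwu, hεp]
    have h0 : ((2 : ℕ) : ZMod 2) = 0 := by decide
    rw [h0, add_zero]
end

section
/- Assume additionally that the weight of the root of T is at least 3. Then every odd vertex v of T with wt_v = 2 has a least ancestor q_v of weight at least 3 (that is, an ancestor q of v with wt_q ≥ 3 such that every vertex on the path from v up to q, other than q itself, has weight 2), and this vertex q_v is odd. -/
open Finset

theorem stmt_6
    (V : Type) [Fintype V] [DecidableEq V]
    (root : V) (parent : V → V) (depth : V → ℕ)
    (hdepth_root : depth root = 0)
    (hdepth : ∀ v, v ≠ root → depth v = depth (parent v) + 1)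
    (C : V → Finset V)
    (hC : ∀ v w, w ∈ C v ↔ w ≠ root ∧ parent w = v)
    (l' wt : V → ℕ)
    (hwt : ∀ v, wt v = l' v + ∑ w ∈ C v, wt w)
    (hwt2 : ∀ v, 2 ≤ wt v)
    (r s l : V → ℕ)
    (hr : ∀ v, r v = ((C v).filter fun w => Odd (wt w)).card)
    (hs : ∀ v, s v = ((C v).filter fun w => Even (wt w)).card)
    (hl : ∀ v, l v = l' v + r v)
    (ε : V → ZMod 2)
    (hεroot : ε root = 0)
    (hε : ∀ w, w ≠ root → ε w = ε (parent w) + (wt w : ZMod 2))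
    (hroot3 : 3 ≤ wt root) :
    ∀ v, ε v = 1 → wt v = 2 →
      ∃ q : V, ∃ n : ℕ, 1 ≤ n ∧ parent^[n] v = q ∧
        (∀ m, m < n → parent^[m] v ≠ root) ∧
        (∀ m, m < n → wt (parent^[m] v) = 2) ∧
        3 ≤ wt q ∧ ε q = 1 := by
  suffices h : ∀ d : ℕ, ∀ v, depth v ≤ d → ε v = 1 → wt v = 2 →
      ∃ q : V, ∃ n : ℕ, 1 ≤ n ∧ parent^[n] v = q ∧
        (∀ m, m < n → parent^[m] v ≠ root) ∧
        (∀ m, m < n → wt (parent^[m] v) = 2) ∧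
        3 ≤ wt q ∧ ε q = 1 by
    intro v hv1 hv2
    exact h (depth v) v le_rfl hv1 hv2
  intro d
  induction d with
  | zero =>
    intro v hdv hv1 hv2
    exfalso
    by_cases hvr : v = root
    · subst hvr; omega
    · rw [hdepth v hvr] at hdv; omega
  | succ d ih =>
    intro v hdv hv1 hv2
    have hvr : v ≠ root := by intro h; subst h; omega
    have hdp : depth (parent v) ≤ d := by
      have := hdepth v hvr; omega
    have hwtv0 : (wt v : ZMod 2) = 0 := by rw [hv2]; decide
    have hεp : ε (parent v) = 1 := by
      have := hε v hvr
      rw [hwtv0, add_zero] at this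
      rw [← this, hv1]
    by_cases hp3 : 3 ≤ wt (parent v)
    · refine ⟨parent v, 1, le_rfl, by simp, ?_, ?_, hp3, hεp⟩
      · intro m hm; interval_cases m; simpa using hvr
      · intro m hm; interval_cases m; simpa using hv2
    · have hp2 : wt (parent v) = 2 := by have := hwt2 (parent v); omega
      obtain ⟨q, n, hn1, hqn, hnr, hn2, hq3, hqε⟩ := ih (parent v) hdp hεp hp2
      refine ⟨q, n + 1, by omega, ?_, ?_, ?_, hq3, hqε⟩
      · rw [Function.iterate_succ_apply, hqn]
      · intro m hm
        cases m with
        | zero => simpa using hvr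
        | succ k =>
          rw [Function.iterate_succ_apply]
          exact hnr k (by omega)
      · intro m hm
        cases m with
        | zero => simpa using hv2
        | succ k =>
          rw [Function.iterate_succ_apply]
          exact hn2 k (by omega)
end

section
/- Assume additionally that the weight of the root of T is at least 3. Let v be an odd vertex of T with wt_v > 2, let L_v = {w ∈ C(v) : wt_w = 2}, and let M_v = {v' ∈ V : v' is an odd leaf with wt_{v'} = 2 and q_{v'} = v}. Then the map sending each w ∈ L_v to the unique leaf of the chain T_w is a bijection from L_v onto M_v; in particular #L_v = #M_v. -/
open Finset

/-- `q` is the least ancestor of `v` of weight at least `3`: every vertex on the path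
from `v` up to `q`, other than `q` itself, has weight `2`. -/
def IsQ {V : Type} (root : V) (parent : V → V) (wt : V → ℕ) (v q : V) : Prop :=
  ∃ n : ℕ, 1 ≤ n ∧ parent^[n] v = q ∧ (∀ m, m < n → parent^[m] v ≠ root) ∧
    (∀ m, m < n → wt (parent^[m] v) = 2) ∧ 3 ≤ wt q

open scoped Classical in
theorem stmt_7
    (V : Type) [Fintype V] [DecidableEq V]
    (root : V) (parent : V → V) (depth : V → ℕ)
    (hdepth_root : depth root = 0)
    (hdepth : ∀ v, v ≠ root → depth v = depth (parent v) + 1)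
    (C : V → Finset V)
    (hC : ∀ v w, w ∈ C v ↔ w ≠ root ∧ parent w = v)
    (l' wt : V → ℕ)
    (hwt : ∀ v, wt v = l' v + ∑ w ∈ C v, wt w)
    (hwt2 : ∀ v, 2 ≤ wt v)
    (r s l : V → ℕ)
    (hr : ∀ v, r v = ((C v).filter fun w => Odd (wt w)).card)
    (hs : ∀ v, s v = ((C v).filter fun w => Even (wt w)).card)
    (hl : ∀ v, l v = l' v + r v)
    (ε : V → ZMod 2)
    (hεroot : ε root = 0)
    (hε : ∀ w, w ≠ root → ε w = ε (parent w) + (wt w : ZMod 2))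
    (hroot3 : 3 ≤ wt root)
    (v : V) (hv : ε v = 1) (hv2 : 2 < wt v) :
    (∀ w ∈ (C v).filter (fun w => wt w = 2),
        ∃! u, Desc root parent w u ∧ C u = ∅) ∧
    (∀ F : V → V,
        (∀ w ∈ (C v).filter (fun w => wt w = 2), Desc root parent w (F w) ∧ C (F w) = ∅) →
        Set.BijOn F
          (((C v).filter (fun w => wt w = 2) : Finset V) : Set V)
          ((univ.filter (fun v' => ε v' = 1 ∧ C v' = ∅ ∧ wt v' = 2 ∧
              IsQ root parent wt v' v) : Finset V) : Set V)) ∧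
    ((C v).filter (fun w => wt w = 2)).card
      = (univ.filter (fun v' => ε v' = 1 ∧ C v' = ∅ ∧ wt v' = 2 ∧
          IsQ root parent wt v' v)).card := by
  classical
  set N := Finset.univ.sup depth with hN
  have hdepthN : ∀ u, depth u ≤ N := fun u => Finset.le_sup (Finset.mem_univ u)
  -- depth along iterates
  have depth_iter : ∀ n (u : V), (∀ m, m < n → parent^[m] u ≠ root) →
      depth (parent^[n] u) + n = depth u := by
    intro n
    induction n with
    | zero => intro u _; simp
    | succ n ih =>
      intro u h
      rw [Function.iterate_succ_apply']
      have hne : parent^[n] u ≠ root := h n (Nat.lt_succ_self n)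
      have := hdepth _ hne
      have := ih u (fun m hm => h m (Nat.lt_succ_of_lt hm))
      omega
  -- weight-2 vertices have at most one child, which is again weight 2
  have hchild : ∀ w, wt w = 2 → C w = ∅ ∨
      ∃ c, C w = {c} ∧ wt c = 2 ∧ depth c = depth w + 1 ∧ ε c = ε w := by
    intro w hw
    have hsum := hwt w
    rw [hw] at hsum
    have hcard : 2 * (C w).card ≤ ∑ c ∈ C w, wt c := by
      calc 2 * (C w).card = ∑ _c ∈ C w, 2 := by
            rw [Finset.sum_const, smul_eq_mul, mul_comm]
        _ ≤ _ := Finset.sum_le_sum fun c _ => hwt2 c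
    have hle : (C w).card ≤ 1 := by omega
    rcases Nat.le_one_iff_eq_zero_or_eq_one.mp hle with h0 | h1
    · exact Or.inl (Finset.card_eq_zero.mp h0)
    · obtain ⟨c, hc⟩ := Finset.card_eq_one.mp h1
      have hcm : c ∈ C w := hc ▸ Finset.mem_singleton_self c
      have hsc : ∑ x ∈ C w, wt x = wt c := by rw [hc, Finset.sum_singleton]
      have hwc : wt c = 2 := by have := hwt2 c; omega
      obtain ⟨hcr, hcp⟩ := (hC w c).mp hcm
      refine Or.inr ⟨c, hc, hwc, ?_, ?_⟩
      · rw [hdepth c hcr, hcp]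
      · rw [hε c hcr, hcp, hwc]
        norm_num
        decide
  -- existence of a "good" leaf below any weight-2 vertex
  have exist : ∀ k (w : V), wt w = 2 → N < depth w + k →
      ∃ u n, parent^[n] u = w ∧ (∀ m, m ≤ n → wt (parent^[m] u) = 2) ∧
        (∀ m, m < n → parent^[m] u ≠ root) ∧ C u = ∅ ∧ ε u = ε w := by
    intro k
    induction k with
    | zero => intro w _ hk; exact absurd (hdepthN w) (by omega)
    | succ k ih =>
      intro w hw hk
      rcases hchild w hw with hempty | ⟨c, hc, hwc, hdc, hec⟩
      · refine ⟨w, 0, rfl, ?_, by omega, hempty, rfl⟩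
        intro m hm
        have : m = 0 := Nat.le_zero.mp hm
        simp [this, hw]
      · obtain ⟨u, n, h1, h2, h3, h4, h5⟩ := ih c hwc (by omega)
        have hcm : c ∈ C w := hc ▸ Finset.mem_singleton_self c
        obtain ⟨hcr, hcp⟩ := (hC w c).mp hcm
        refine ⟨u, n + 1, ?_, ?_, ?_, h4, by rw [h5, hec]⟩
        · rw [Function.iterate_succ_apply', h1, hcp]
        · intro m hm
          rcases Nat.lt_or_ge m (n + 1) with h | h
          · exact h2 m (by omega)
          · have : m = n + 1 := by omega
            rw [this, Function.iterate_succ_apply', h1, hcp, hw]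
        · intro m hm
          rcases Nat.lt_or_ge m n with h | h
          · exact h3 m h
          · have : m = n := by omega
            rw [this, h1]; exact hcr
  -- uniqueness of the leaf below any weight-2 vertex
  have uniq : ∀ k (w : V), wt w = 2 → N < depth w + k →
      ∀ u1 u2, Desc root parent w u1 → C u1 = ∅ → Desc root parent w u2 → C u2 = ∅ →
        u1 = u2 := by
    intro k
    induction k with
    | zero => intro w _ hk; exact absurd (hdepthN w) (by omega)
    | succ k ih =>
      intro w hw hk u1 u2 hd1 hl1 hd2 hl2
      rcases hchild w hw with hempty | ⟨c, hc, hwc, hdc, hec⟩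
      · -- every leaf-descendant is w itself
        have key : ∀ u, Desc root parent w u → u = w := by
          rintro u ⟨n, h1, h2⟩
          cases n with
          | zero => exact h1
          | succ n =>
            exfalso
            have hx : parent^[n] u ∈ C w := by
              rw [hC]
              refine ⟨h2 n (Nat.lt_succ_self n), ?_⟩
              rw [← Function.iterate_succ_apply' parent n u, h1]
            rw [hempty] at hx
            exact absurd hx (Finset.notMem_empty _)
        rw [key u1 hd1, key u2 hd2]
      · -- every leaf-descendant of w is a leaf-descendant of c
        have key : ∀ u, Desc root parent w u → C u = ∅ → Desc root parent c u := by
          rintro u ⟨n, h1, h2⟩ hlu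
          cases n with
          | zero =>
            exfalso
            have : C w = ∅ := h1 ▸ hlu
            rw [hc] at this
            exact Finset.singleton_ne_empty c this
          | succ n =>
            have hx : parent^[n] u ∈ C w := by
              rw [hC]
              refine ⟨h2 n (Nat.lt_succ_self n), ?_⟩
              rw [← Function.iterate_succ_apply' parent n u, h1]
            rw [hc, Finset.mem_singleton] at hx
            exact ⟨n, hx, fun m hm => h2 m (Nat.lt_succ_of_lt hm)⟩
        exact ih c hwc (by omega) u1 u2 (key u1 hd1 hl1) hl1 (key u2 hd2 hl2) hl2
  -- abbreviations
  set L := (C v).filter (fun w => wt w = 2) with hL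
  set M := Finset.univ.filter (fun v' => ε v' = 1 ∧ C v' = ∅ ∧ wt v' = 2 ∧
      IsQ root parent wt v' v) with hM
  have hLmem : ∀ w, w ∈ L → w ∈ C v ∧ wt w = 2 := by
    intro w hw; rw [hL, Finset.mem_filter] at hw; exact hw
  -- Part 1
  have part1 : ∀ w ∈ L, ∃! u, Desc root parent w u ∧ C u = ∅ := by
    intro w hw
    obtain ⟨hwC, hw2⟩ := hLmem w hw
    obtain ⟨u, n, h1, h2, h3, h4, h5⟩ := exist (N + 1) w hw2 (by omega)
    refine ⟨u, ⟨⟨n, h1, h3⟩, h4⟩, ?_⟩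
    rintro u' ⟨hd', hl'⟩
    exact uniq (N + 1) w hw2 (by omega) u' u hd' hl' ⟨n, h1, h3⟩ h4
  -- key: for w ∈ L and any F satisfying the hypothesis, F w is the "good" leaf
  have goodF : ∀ (F : V → V), (∀ w ∈ L, Desc root parent w (F w) ∧ C (F w) = ∅) →
      ∀ w ∈ L, F w ∈ M ∧ ∃ n, parent^[n] (F w) = w ∧
        (∀ m, m < n → parent^[m] (F w) ≠ root) := by
    intro F hF w hw
    obtain ⟨hwC, hw2⟩ := hLmem w hw
    obtain ⟨hwr, hwp⟩ := (hC v w).mp hwC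
    obtain ⟨u, n, h1, h2, h3, h4, h5⟩ := exist (N + 1) w hw2 (by omega)
    have hFu : F w = u := by
      obtain ⟨hd, hl⟩ := hF w hw
      exact uniq (N + 1) w hw2 (by omega) (F w) u hd hl ⟨n, h1, h3⟩ h4
    have hεw : ε w = 1 := by
      rw [hε w hwr, hwp, hv, hw2]
      norm_num
      decide
    have hwtu : wt u = 2 := by
      have := h2 0 (Nat.zero_le n)
      simpa using this
    have hisq : IsQ root parent wt u v := by
      refine ⟨n + 1, Nat.le_add_left 1 n, ?_, ?_, ?_, by omega⟩
      · rw [Function.iterate_succ_apply', h1, hwp]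
      · intro m hm
        rcases Nat.lt_or_ge m n with h | h
        · exact h3 m h
        · have : m = n := by omega
          rw [this, h1]; exact hwr
      · intro m hm
        exact h2 m (by omega)
    refine ⟨?_, n, hFu ▸ h1, hFu ▸ h3⟩
    rw [hM, Finset.mem_filter, hFu]
    exact ⟨Finset.mem_univ u, by rw [h5, hεw], h4, hwtu, hisq⟩
  -- depths of members of L
  have hLdepth : ∀ w ∈ L, depth w = depth v + 1 := by
    intro w hw
    obtain ⟨hwC, _⟩ := hLmem w hw
    obtain ⟨hwr, hwp⟩ := (hC v w).mp hwC
    rw [hdepth w hwr, hwp]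
  -- Part 2
  have part2 : ∀ F : V → V, (∀ w ∈ L, Desc root parent w (F w) ∧ C (F w) = ∅) →
      Set.BijOn F (L : Set V) (M : Set V) := by
    intro F hF
    refine ⟨?_, ?_, ?_⟩
    · intro w hw
      exact Finset.mem_coe.mpr (goodF F hF w (Finset.mem_coe.mp hw)).1
    · intro w1 hw1 w2 hw2 heq
      have hw1' := Finset.mem_coe.mp hw1
      have hw2' := Finset.mem_coe.mp hw2
      obtain ⟨_, n1, h11, h12⟩ := goodF F hF w1 hw1'
      obtain ⟨_, n2, h21, h22⟩ := goodF F hF w2 hw2'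
      have d1 := depth_iter n1 (F w1) h12
      have d2 := depth_iter n2 (F w2) h22
      rw [h11] at d1
      rw [h21] at d2
      rw [hLdepth w1 hw1'] at d1
      rw [hLdepth w2 hw2'] at d2
      rw [heq] at d1
      have hn : n1 = n2 := by omega
      rw [← h11, ← h21, heq, hn]
    · intro u hu
      rw [Finset.mem_coe, hM, Finset.mem_filter] at hu
      obtain ⟨-, hε1, hlu, hwtu, n, hn1, hnp, hnr, hnw, -⟩ := hu
      -- the child of v on the chain
      have hn' : n - 1 + 1 = n := by omega
      have hwp : parent (parent^[n - 1] u) = v := by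
        have h := Function.iterate_succ_apply' parent (n - 1) u
        rw [Nat.succ_eq_add_one, hn'] at h
        rw [← h, hnp]
      have hwr : parent^[n - 1] u ≠ root := hnr (n - 1) (by omega)
      have hww : wt (parent^[n - 1] u) = 2 := hnw (n - 1) (by omega)
      have hwL : parent^[n - 1] u ∈ L := by
        rw [hL, Finset.mem_filter, hC]
        exact ⟨⟨hwr, hwp⟩, hww⟩
      have hdu : Desc root parent (parent^[n - 1] u) u :=
        ⟨n - 1, rfl, fun m hm => hnr m (by omega)⟩
      refine ⟨parent^[n - 1] u, Finset.mem_coe.mpr hwL, ?_⟩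
      obtain ⟨hdF, hlF⟩ := hF _ hwL
      exact uniq (N + 1) _ hww (by omega) (F (parent^[n - 1] u)) u hdF hlF hdu hlu
  refine ⟨part1, part2, ?_⟩
  -- Part 3: cardinality, via a choice function
  have hex : ∀ w ∈ L, ∃ u, Desc root parent w u ∧ C u = ∅ := by
    intro w hw
    obtain ⟨u, hu, -⟩ := part1 w hw
    exact ⟨u, hu⟩
  set F : V → V := fun w =>
    if h : ∃ u, Desc root parent w u ∧ C u = ∅ then h.choose else w with hFdef
  have hF : ∀ w ∈ L, Desc root parent w (F w) ∧ C (F w) = ∅ := by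
    intro w hw
    have h := hex w hw
    rw [hFdef]
    simp only [dif_pos h]
    exact h.choose_spec
  have hbij := part2 F hF
  refine Finset.card_bij (fun w _ => F w) ?_ ?_ ?_
  · intro a ha
    exact Finset.mem_coe.mp (hbij.1 (Finset.mem_coe.mpr ha))
  · intro a1 ha1 a2 ha2 h
    exact hbij.2.1 (Finset.mem_coe.mpr ha1) (Finset.mem_coe.mpr ha2) h
  · intro b hb
    obtain ⟨a, ha, hab⟩ := hbij.2.2 (Finset.mem_coe.mpr hb)
    exact ⟨a, Finset.mem_coe.mp ha, hab⟩
end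

section
/- Assume additionally that the weight of the root of T is at least 3. Then Σ_{v ∈ V} D''(v) = Σ_{v ∈ V} D'(v). -/
open Finset

theorem stmt_8
    (V : Type) [Fintype V] [DecidableEq V]
    (root : V) (parent : V → V) (depth : V → ℕ)
    (hdepth_root : depth root = 0)
    (hdepth : ∀ v, v ≠ root → depth v = depth (parent v) + 1)
    (C : V → Finset V)
    (hC : ∀ v w, w ∈ C v ↔ w ≠ root ∧ parent w = v)
    (l' wt : V → ℕ)
    (hwt : ∀ v, wt v = l' v + ∑ w ∈ C v, wt w)
    (hwt2 : ∀ v, 2 ≤ wt v)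
    (r s l : V → ℕ)
    (hr : ∀ v, r v = ((C v).filter fun w => Odd (wt w)).card)
    (hs : ∀ v, s v = ((C v).filter fun w => Even (wt w)).card)
    (hl : ∀ v, l v = l' v + r v)
    (ε : V → ZMod 2)
    (hεroot : ε root = 0)
    (hε : ∀ w, w ≠ root → ε w = ε (parent w) + (wt w : ZMod 2))
    (D' : V → ℤ)
    (hD'_even : ∀ v, ε v = 0 → D' v =
      2 * (s v : ℤ) + ∑ w ∈ (C v).filter (fun w => ε w = 1), (wt w : ℤ) * ((wt w : ℤ) - 1))
    (hD'_odd : ∀ v, ε v = 1 → D' v =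
      2 * ((l v : ℤ) + (s v : ℤ)) - (wt v : ℤ) * ((wt v : ℤ) - 1) +
        ∑ w ∈ (C v).filter (fun w => ε w = 1), (wt w : ℤ) * ((wt w : ℤ) - 1))
    (D'' : V → ℤ)
    (hD''_oddleaf : ∀ v, ε v = 1 → C v = ∅ → wt v = 2 → D'' v = D' v - 2)
    (hD''_oddbig : ∀ v, ε v = 1 → 2 < wt v →
      D'' v = D' v + 2 * (((C v).filter (fun w => wt w = 2)).card : ℤ))
    (hD''_even : ∀ v, ε v = 0 → D'' v = D' v)
    (hD''_oddmid : ∀ v, ε v = 1 → C v ≠ ∅ → wt v = 2 → D'' v = D' v)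
    (hroot3 : 3 ≤ wt root) :
    ∑ v, D'' v = ∑ v, D' v := by
  classical
  have hone : ∀ a : ZMod 2, a ≠ 1 → a = 0 := by decide
  have hcast2 : ((2 : ℕ) : ZMod 2) = 0 := by decide
  have hnotroot : ∀ v, wt v = 2 → v ≠ root := by
    intro v hv h; rw [h] at hv; omega
  -- parity propagates unchanged through weight-2 vertices
  have hεpar : ∀ w, wt w = 2 → ε w = ε (parent w) := by
    intro w hw
    have := hε w (hnotroot w hw)
    rw [hw, hcast2, add_zero] at this
    exact this
  -- key structural lemma about weight-2 vertices
  have key : ∀ x y, wt x = 2 → y ∈ C x → C x = {y} ∧ wt y = 2 := by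
    intro x y hx hy
    have hle : wt y ≤ ∑ w ∈ C x, wt w :=
      Finset.single_le_sum (fun i _ => Nat.zero_le _) hy
    have hwx := hwt x
    have hy2 : wt y = 2 := by have := hwt2 y; omega
    refine ⟨Finset.eq_singleton_iff_unique_mem.mpr ⟨hy, ?_⟩, hy2⟩
    intro z hz
    by_contra hzy
    have hsub : ({y, z} : Finset V) ⊆ C x := by
      intro a ha
      rcases Finset.mem_insert.1 ha with h | h
      · rwa [h]
      · rw [Finset.mem_singleton.1 h]; exact hz
    have hsum : wt y + wt z ≤ ∑ w ∈ C x, wt w := by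
      have h := Finset.sum_le_sum_of_subset (f := wt) hsub
      rwa [Finset.sum_pair (fun h => hzy h.symm)] at h
    have := hwt2 z; omega
  -- the "unique child" function
  let ch : V → V := fun v => if h : (C v).Nonempty then h.choose else v
  have hch : ∀ v, (C v).Nonempty → ch v ∈ C v := by
    intro v h
    simp only [ch, dif_pos h]
    exact Exists.choose_spec h
  set S2 : Finset V := univ.filter (fun v => wt v = 2 ∧ ε v = 1) with hS2
  -- bijection: non-leaves of S2 ↔ elements of S2 whose parent has weight 2
  have hbij : (S2.filter fun v => (C v).Nonempty).card
      = (S2.filter fun v => wt (parent v) = 2).card := by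
    apply Finset.card_bij' (i := fun v _ => ch v) (j := fun w _ => parent w)
    · intro v hv
      simp only [hS2, Finset.mem_filter, Finset.mem_univ, true_and] at hv ⊢
      obtain ⟨⟨hv2, hv1⟩, hvne⟩ := hv
      have hmem := hch v hvne
      obtain ⟨hCx, hwch⟩ := key v (ch v) hv2 hmem
      have hpar : parent (ch v) = v := ((hC v (ch v)).1 hmem).2
      refine ⟨⟨hwch, ?_⟩, by rw [hpar]; exact hv2⟩
      rw [hεpar (ch v) hwch, hpar]; exact hv1
    · intro w hw
      simp only [hS2, Finset.mem_filter, Finset.mem_univ, true_and] at hw ⊢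
      obtain ⟨⟨hw2, hw1⟩, hwp⟩ := hw
      have hmem : w ∈ C (parent w) := (hC (parent w) w).2 ⟨hnotroot w hw2, rfl⟩
      refine ⟨⟨hwp, ?_⟩, ⟨w, hmem⟩⟩
      rw [← hεpar w hw2]; exact hw1
    · intro v hv
      simp only [hS2, Finset.mem_filter, Finset.mem_univ, true_and] at hv
      exact ((hC v (ch v)).1 (hch v hv.2)).2
    · intro w hw
      simp only [hS2, Finset.mem_filter, Finset.mem_univ, true_and] at hw
      obtain ⟨⟨hw2, hw1⟩, hwp⟩ := hw
      have hmem : w ∈ C (parent w) := (hC (parent w) w).2 ⟨hnotroot w hw2, rfl⟩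
      obtain ⟨hCx, _⟩ := key (parent w) w hwp hmem
      have := hch (parent w) ⟨w, hmem⟩
      rw [hCx, Finset.mem_singleton] at this
      exact this
  -- hence #(odd leaves of weight 2) = #(weight-2 odd vertices with heavy parent)
  have hAB : (S2.filter fun v => C v = ∅).card
      = (S2.filter fun v => ¬ wt (parent v) = 2).card := by
    have h1 := Finset.card_filter_add_card_filter_not
      (s := S2) (p := fun v => (C v).Nonempty)
    have h2 := Finset.card_filter_add_card_filter_not
      (s := S2) (p := fun v => wt (parent v) = 2)
    have h3 : (S2.filter fun v => ¬ (C v).Nonempty) = S2.filter fun v => C v = ∅ := by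
      apply Finset.filter_congr
      intro v _
      simp [Finset.not_nonempty_iff_eq_empty]
    rw [h3] at h1
    omega
  -- now compute the sum of differences
  have hsum : ∑ v, (D'' v - D' v) = 0 := by
    rw [← Finset.sum_filter_add_sum_filter_not univ (fun v => ε v = 1)]
    have heven : ∑ v ∈ univ.filter (fun v => ¬ ε v = 1), (D'' v - D' v) = 0 :=
      Finset.sum_eq_zero (fun v hv => by
        rw [hD''_even v (hone _ (Finset.mem_filter.1 hv).2)]; ring)
    rw [heven, add_zero]
    rw [← Finset.sum_filter_add_sum_filter_not (univ.filter (fun v => ε v = 1))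
      (fun v => wt v = 2)]
    -- the weight-2 odd vertices
    have hT2 : ((univ.filter (fun v => ε v = 1)).filter (fun v => wt v = 2)) = S2 := by
      rw [hS2, Finset.filter_filter]
      apply Finset.filter_congr
      intro v _; tauto
    rw [hT2]
    have hsplit2 : ∑ v ∈ S2, (D'' v - D' v)
        = ∑ v ∈ S2.filter (fun v => C v = ∅), (D'' v - D' v) := by
      rw [← Finset.sum_filter_add_sum_filter_not S2 (fun v => C v = ∅)]
      have : ∑ v ∈ S2.filter (fun v => ¬ C v = ∅), (D'' v - D' v) = 0 :=
        Finset.sum_eq_zero (fun v hv => by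
          simp only [hS2, Finset.mem_filter, Finset.mem_univ, true_and] at hv
          rw [hD''_oddmid v hv.1.2 hv.2 hv.1.1]; ring)
      rw [this, add_zero]
    have hleafval : ∑ v ∈ S2.filter (fun v => C v = ∅), (D'' v - D' v)
        = -2 * ((S2.filter (fun v => C v = ∅)).card : ℤ) := by
      have step : ∀ v ∈ S2.filter (fun v => C v = ∅), D'' v - D' v = -2 := by
        intro v hv
        simp only [hS2, Finset.mem_filter, Finset.mem_univ, true_and] at hv
        rw [hD''_oddleaf v hv.1.2 hv.2 hv.1.1]; ring
      rw [Finset.sum_congr rfl step, Finset.sum_const, nsmul_eq_mul]; ring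
    -- the heavy odd vertices
    set T : Finset V := (univ.filter (fun v => ε v = 1)).filter (fun v => ¬ wt v = 2) with hT
    have hbigval : ∑ v ∈ T, (D'' v - D' v)
        = 2 * ((∑ v ∈ T, ((C v).filter (fun w => wt w = 2)).card : ℕ) : ℤ) := by
      push_cast
      rw [Finset.mul_sum]
      apply Finset.sum_congr rfl
      intro v hv
      simp only [hT, Finset.mem_filter, Finset.mem_univ, true_and] at hv
      have hgt : 2 < wt v := by have := hwt2 v; omega
      rw [hD''_oddbig v hv.1 hgt]; ring
    have hdisj : ∀ x ∈ T, ∀ y ∈ T, x ≠ y →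
        Disjoint ((C x).filter (fun w => wt w = 2)) ((C y).filter (fun w => wt w = 2)) := by
      intro x _ y _ hxy
      rw [Finset.disjoint_left]
      intro a ha hb
      have h1 := ((hC x a).1 (Finset.mem_filter.1 ha).1).2
      have h2 := ((hC y a).1 (Finset.mem_filter.1 hb).1).2
      exact hxy (h1 ▸ h2 ▸ rfl)
    have hbu : T.biUnion (fun v => (C v).filter (fun w => wt w = 2))
        = S2.filter fun v => ¬ wt (parent v) = 2 := by
      ext w
      simp only [Finset.mem_biUnion, Finset.mem_filter, Finset.mem_univ, true_and,
        hS2, hT, hC]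
      constructor
      · rintro ⟨v, ⟨hv1, hv2⟩, ⟨_, hpw⟩, hw2⟩
        refine ⟨⟨hw2, ?_⟩, by rw [hpw]; exact hv2⟩
        rw [hεpar w hw2, hpw]; exact hv1
      · rintro ⟨⟨hw2, hw1⟩, hwp⟩
        refine ⟨parent w, ⟨?_, hwp⟩, ⟨hnotroot w hw2, rfl⟩, hw2⟩
        rw [← hεpar w hw2]; exact hw1
    have hcount : (∑ v ∈ T, ((C v).filter (fun w => wt w = 2)).card : ℕ)
        = (S2.filter fun v => ¬ wt (parent v) = 2).card := by
      rw [← Finset.card_biUnion hdisj, hbu]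
    rw [hsplit2, hleafval, hbigval, hcount, hAB]
    ring
  have := Finset.sum_sub_distrib (s := (univ : Finset V)) (f := D'') (g := D')
  omega
end

section
/- For every vertex v of T, D''(v) ≤ d(v). -/
/-!
Write `f n = n (n - 1)`, so `d v = ∑ f (wt w)` over the children. At an even vertex the odd
children are those of odd weight, and each even-weight child contributes `f (wt w) ≥ 2`, which pays
for the term `2 s_v`. At an odd vertex the odd children are those of even weight, and
`l_v + s_v = l'_v + #C(v)`; since every child weighs at least 2, `2 (l'_v + #C(v)) ≤ 2 wt_v`,
which is at most `f (wt_v)` with room for the correction `2 #L_v ≤ 2 #C(v)` once `wt_v ≥ 3`.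
The two cases `wt_v = 2` are checked directly: a leaf has `l'_v = 2`, otherwise `v` has a single
child and `l'_v = 0`.
-/

open Finset

lemma two_le_natCast_mul_pred {n : ℕ} (hn : 2 ≤ n) : (2 : ℤ) ≤ n * (n - 1) := by
  have : (2 : ℤ) ≤ n := by exact_mod_cast hn
  nlinarith

lemma two_mul_card_le_sum {ι : Type*} (S : Finset ι) (wt : ι → ℕ) (hwt : ∀ i ∈ S, 2 ≤ wt i) :
    2 * #S ≤ ∑ i ∈ S, wt i := by
  simpa [mul_comm] using card_nsmul_le_sum S wt 2 hwt

lemma card_filter_odd_add_card_filter_even {ι : Type*} (S : Finset ι) (wt : ι → ℕ) :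
    #(S.filter fun i => Odd (wt i)) + #(S.filter fun i => Even (wt i)) = #S := by
  simpa only [Nat.not_odd_iff_even] using
    card_filter_add_card_filter_not (s := S) fun i => Odd (wt i)

lemma two_mul_card_filter_even_add_sum_filter_odd_le {ι : Type*} (S : Finset ι) (wt : ι → ℕ)
    (hwt : ∀ i ∈ S, 2 ≤ wt i) :
    2 * (#(S.filter fun i => Even (wt i)) : ℤ) +
        ∑ i ∈ S.filter (fun i => Odd (wt i)), (wt i : ℤ) * (wt i - 1) ≤
      ∑ i ∈ S, (wt i : ℤ) * (wt i - 1) := by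
  rw [← sum_filter_not_add_sum_filter S fun i => Odd (wt i)]
  simp only [Nat.not_odd_iff_even]
  gcongr
  simpa [mul_comm] using card_nsmul_le_sum (S.filter fun i => Even (wt i))
    (fun i => (wt i : ℤ) * (wt i - 1)) 2
    fun i hi => two_le_natCast_mul_pred (hwt i (mem_filter.1 hi).1)

lemma two_mul_add_card_add_le_mul_pred {ι : Type*} (S : Finset ι) (wt : ι → ℕ) (a n : ℕ)
    (hn : n = a + ∑ i ∈ S, wt i) (hwt : ∀ i ∈ S, 2 ≤ wt i) (h2n : 2 ≤ n) (c : ℤ)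
    (hbig : 2 < n → c = 2 * #(S.filter fun i => wt i = 2))
    (hleaf : S = ∅ → n = 2 → c = -2)
    (hmid : S ≠ ∅ → n = 2 → c = 0) :
    2 * ((a : ℤ) + #S) + c ≤ n * (n - 1) := by
  have hcard := two_mul_card_le_sum S wt hwt
  rcases h2n.lt_or_eq with hlt | heq
  · have hk := card_filter_le S fun i => wt i = 2
    have h3 : (3 : ℤ) ≤ n := by exact_mod_cast hlt
    have : (2 * (a + #S) + 2 * #(S.filter fun i => wt i = 2) : ℤ) ≤ 2 * n := by
      exact_mod_cast (by omega : 2 * (a + #S) + 2 * #(S.filter fun i => wt i = 2) ≤ 2 * n)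
    rw [hbig hlt]
    nlinarith
  · subst heq
    by_cases hS : S = ∅
    · subst hS
      simp only [sum_empty, add_zero] at hn
      subst hn
      rw [hleaf rfl rfl]
      norm_num
    · obtain ⟨i, hi⟩ := nonempty_iff_ne_empty.2 hS
      have hsum := (hwt i hi).trans (single_le_sum (fun _ _ => Nat.zero_le _) hi)
      have hsmall : (a : ℤ) + #S ≤ 1 := by exact_mod_cast (by omega : a + #S ≤ 1)
      rw [hmid hS rfl]
      push_cast
      linarith

theorem stmt_10_general
    (V : Type)
    (root : V) (parent : V → V)
    (C : V → Finset V)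
    (hC : ∀ v w, w ∈ C v ↔ w ≠ root ∧ parent w = v)
    (l' wt : V → ℕ)
    (hwt : ∀ v, wt v = l' v + ∑ w ∈ C v, wt w)
    (hwt2 : ∀ v, 2 ≤ wt v)
    (r s l : V → ℕ)
    (hr : ∀ v, r v = ((C v).filter fun w => Odd (wt w)).card)
    (hs : ∀ v, s v = ((C v).filter fun w => Even (wt w)).card)
    (hl : ∀ v, l v = l' v + r v)
    (ε : V → ZMod 2)
    (hε : ∀ w, w ≠ root → ε w = ε (parent w) + (wt w : ZMod 2))
    (d : V → ℤ)
    (hd : ∀ v, d v = ∑ w ∈ C v, (wt w : ℤ) * ((wt w : ℤ) - 1))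
    (D' : V → ℤ)
    (hD'_even : ∀ v, ε v = 0 → D' v =
      2 * (s v : ℤ) + ∑ w ∈ (C v).filter (fun w => ε w = 1), (wt w : ℤ) * ((wt w : ℤ) - 1))
    (hD'_odd : ∀ v, ε v = 1 → D' v =
      2 * ((l v : ℤ) + (s v : ℤ)) - (wt v : ℤ) * ((wt v : ℤ) - 1) +
        ∑ w ∈ (C v).filter (fun w => ε w = 1), (wt w : ℤ) * ((wt w : ℤ) - 1))
    (D'' : V → ℤ)
    (hD''_oddleaf : ∀ v, ε v = 1 → C v = ∅ → wt v = 2 → D'' v = D' v - 2)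
    (hD''_oddbig : ∀ v, ε v = 1 → 2 < wt v →
      D'' v = D' v + 2 * (((C v).filter (fun w => wt w = 2)).card : ℤ))
    (hD''_even : ∀ v, ε v = 0 → D'' v = D' v)
    (hD''_oddmid : ∀ v, ε v = 1 → C v ≠ ∅ → wt v = 2 → D'' v = D' v) :
    ∀ v, D'' v ≤ d v := by
  intro v
  have hchild : ∀ w ∈ C v, ε w = ε v + wt w := fun w hw => by
    obtain ⟨hroot, rfl⟩ := (hC v w).1 hw
    exact hε w hroot
  rcases (by decide : ∀ a : ZMod 2, a = 0 ∨ a = 1) (ε v) with hv | hv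
  · have hodd : (C v).filter (fun w => ε w = 1) = (C v).filter fun w => Odd (wt w) :=
      filter_congr fun w hw => by rw [hchild w hw, hv, zero_add, ZMod.natCast_eq_one_iff_odd]
    rw [hD''_even v hv, hD'_even v hv, hodd, hs, hd]
    exact two_mul_card_filter_even_add_sum_filter_odd_le _ wt fun w _ => hwt2 w
  · have heven : (C v).filter (fun w => ε w = 1) = (C v).filter fun w => Even (wt w) :=
      filter_congr fun w hw => by
        rw [hchild w hw, hv, add_eq_left, ZMod.natCast_eq_zero_iff_even]
    have hls : (l v + s v : ℤ) = l' v + #(C v) := by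
      rw [hl, hr, hs]
      exact_mod_cast by rw [add_assoc, card_filter_odd_add_card_filter_even]
    have hbudget := two_mul_add_card_add_le_mul_pred (C v) wt (l' v) (wt v) (hwt v)
      (fun w _ => hwt2 w) (hwt2 v) (D'' v - D' v)
      (fun h => by rw [hD''_oddbig v hv h]; ring) (fun h h' => by rw [hD''_oddleaf v hv h h']; ring)
      (fun h h' => by rw [hD''_oddmid v hv h h']; ring)
    have hrest : 0 ≤ ∑ w ∈ (C v).filter (fun w => ¬Even (wt w)), (wt w : ℤ) * (wt w - 1) :=
      sum_nonneg fun w _ => (two_le_natCast_mul_pred (hwt2 w)).trans' (by norm_num)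
    rw [hd, ← sum_filter_add_sum_filter_not (C v) fun w => Even (wt w)]
    rw [hD'_odd v hv, heven, hls] at hbudget
    linarith

theorem stmt_10
    (V : Type) [Fintype V] [DecidableEq V]
    (root : V) (parent : V → V) (depth : V → ℕ)
    (hdepth_root : depth root = 0)
    (hdepth : ∀ v, v ≠ root → depth v = depth (parent v) + 1)
    (C : V → Finset V)
    (hC : ∀ v w, w ∈ C v ↔ w ≠ root ∧ parent w = v)
    (l' wt : V → ℕ)
    (hwt : ∀ v, wt v = l' v + ∑ w ∈ C v, wt w)
    (hwt2 : ∀ v, 2 ≤ wt v)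
    (r s l : V → ℕ)
    (hr : ∀ v, r v = ((C v).filter fun w => Odd (wt w)).card)
    (hs : ∀ v, s v = ((C v).filter fun w => Even (wt w)).card)
    (hl : ∀ v, l v = l' v + r v)
    (ε : V → ZMod 2)
    (hεroot : ε root = 0)
    (hε : ∀ w, w ≠ root → ε w = ε (parent w) + (wt w : ZMod 2))
    (d : V → ℤ)
    (hd : ∀ v, d v = ∑ w ∈ C v, (wt w : ℤ) * ((wt w : ℤ) - 1))
    (D' : V → ℤ)
    (hD'_even : ∀ v, ε v = 0 → D' v =
      2 * (s v : ℤ) + ∑ w ∈ (C v).filter (fun w => ε w = 1), (wt w : ℤ) * ((wt w : ℤ) - 1))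
    (hD'_odd : ∀ v, ε v = 1 → D' v =
      2 * ((l v : ℤ) + (s v : ℤ)) - (wt v : ℤ) * ((wt v : ℤ) - 1) +
        ∑ w ∈ (C v).filter (fun w => ε w = 1), (wt w : ℤ) * ((wt w : ℤ) - 1))
    (D'' : V → ℤ)
    (hD''_oddleaf : ∀ v, ε v = 1 → C v = ∅ → wt v = 2 → D'' v = D' v - 2)
    (hD''_oddbig : ∀ v, ε v = 1 → 2 < wt v →
      D'' v = D' v + 2 * (((C v).filter (fun w => wt w = 2)).card : ℤ))
    (hD''_even : ∀ v, ε v = 0 → D'' v = D' v)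
    (hD''_oddmid : ∀ v, ε v = 1 → C v ≠ ∅ → wt v = 2 → D'' v = D' v) :
    ∀ v, D'' v ≤ d v :=
  stmt_10_general V root parent C hC l' wt hwt hwt2 r s l hr hs hl ε hε d hd D' hD'_even hD'_odd D''
    hD''_oddleaf hD''_oddbig hD''_even hD''_oddmid
end

section
/- Let v be an odd vertex of T. Then D''(v) = d(v) if and only if either wt_v = 2, or wt_v = 3 and v has no even children (equivalently, wt_v = 3 and r_v = 0). -/
open Finset

theorem stmt_12
    (V : Type) [Fintype V] [DecidableEq V]
    (root : V) (parent : V → V) (depth : V → ℕ)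
    (hdepth_root : depth root = 0)
    (hdepth : ∀ v, v ≠ root → depth v = depth (parent v) + 1)
    (C : V → Finset V)
    (hC : ∀ v w, w ∈ C v ↔ w ≠ root ∧ parent w = v)
    (l' wt : V → ℕ)
    (hwt : ∀ v, wt v = l' v + ∑ w ∈ C v, wt w)
    (hwt2 : ∀ v, 2 ≤ wt v)
    (r s l : V → ℕ)
    (hr : ∀ v, r v = ((C v).filter fun w => Odd (wt w)).card)
    (hs : ∀ v, s v = ((C v).filter fun w => Even (wt w)).card)
    (hl : ∀ v, l v = l' v + r v)
    (ε : V → ZMod 2)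
    (hεroot : ε root = 0)
    (hε : ∀ w, w ≠ root → ε w = ε (parent w) + (wt w : ZMod 2))
    (d : V → ℤ)
    (hd : ∀ v, d v = ∑ w ∈ C v, (wt w : ℤ) * ((wt w : ℤ) - 1))
    (D' : V → ℤ)
    (hD'_even : ∀ v, ε v = 0 → D' v =
      2 * (s v : ℤ) + ∑ w ∈ (C v).filter (fun w => ε w = 1), (wt w : ℤ) * ((wt w : ℤ) - 1))
    (hD'_odd : ∀ v, ε v = 1 → D' v =
      2 * ((l v : ℤ) + (s v : ℤ)) - (wt v : ℤ) * ((wt v : ℤ) - 1) +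
        ∑ w ∈ (C v).filter (fun w => ε w = 1), (wt w : ℤ) * ((wt w : ℤ) - 1))
    (D'' : V → ℤ)
    (hD''_oddleaf : ∀ v, ε v = 1 → C v = ∅ → wt v = 2 → D'' v = D' v - 2)
    (hD''_oddbig : ∀ v, ε v = 1 → 2 < wt v →
      D'' v = D' v + 2 * (((C v).filter (fun w => wt w = 2)).card : ℤ))
    (hD''_even : ∀ v, ε v = 0 → D'' v = D' v)
    (hD''_oddmid : ∀ v, ε v = 1 → C v ≠ ∅ → wt v = 2 → D'' v = D' v)
    (v : V) (hv : ε v = 1) :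
    D'' v = d v ↔ (wt v = 2 ∨ (wt v = 3 ∧ r v = 0)) := by
  classical
  -- odd children of v are exactly children of even weight
  have hfilter : (C v).filter (fun w => ε w = 1) = (C v).filter (fun w => Even (wt w)) := by
    apply filter_congr
    intro w hw
    obtain ⟨hwr, hwp⟩ := (hC v w).mp hw
    rw [hε w hwr, hwp, hv]
    rw [add_eq_left, CharP.cast_eq_zero_iff (ZMod 2) 2 (wt w)]
    exact even_iff_two_dvd.symm
  have hnotodd : (C v).filter (fun w => ¬ Odd (wt w)) = (C v).filter (fun w => Even (wt w)) := by
    apply filter_congr; intro w hw; rw [Nat.not_odd_iff_even]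
  -- r + s = number of children
  have hrs : r v + s v = (C v).card := by
    rw [hr, hs, ← hnotodd]
    exact card_filter_add_card_filter_not (fun w => Odd (wt w))
  -- sum split
  have hdsplit : d v = (∑ w ∈ (C v).filter (fun w => Even (wt w)), (wt w : ℤ) * ((wt w : ℤ) - 1))
      + (∑ w ∈ (C v).filter (fun w => Odd (wt w)), (wt w : ℤ) * ((wt w : ℤ) - 1)) := by
    rw [hd, ← sum_filter_add_sum_filter_not (C v) (fun w => Odd (wt w)), hnotodd, add_comm]
  have hD'v : D' v = 2 * ((l v : ℤ) + (s v : ℤ)) - (wt v : ℤ) * ((wt v : ℤ) - 1) +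
      ∑ w ∈ (C v).filter (fun w => Even (wt w)), (wt w : ℤ) * ((wt w : ℤ) - 1) := by
    rw [hD'_odd v hv, hfilter]
  have hsumwt : wt v = l' v + ∑ w ∈ C v, wt w := hwt v
  have hcard2 : 2 * (C v).card ≤ ∑ w ∈ C v, wt w := by
    have := Finset.card_nsmul_le_sum (C v) wt 2 (fun w _ => hwt2 w)
    simpa [mul_comm] using this
  by_cases h4 : 4 ≤ wt v
  · -- big case: D'' v < d v, RHS false
    have hRHS : ¬ (wt v = 2 ∨ (wt v = 3 ∧ r v = 0)) := by
      rintro (h | ⟨h, _⟩) <;> omega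
    simp only [hRHS, iff_false]
    have hD''v := hD''_oddbig v hv (by omega)
    have hL : ((C v).filter (fun w => wt w = 2)).card ≤ s v := by
      rw [hs]
      apply card_le_card
      intro x hx
      simp only [mem_filter] at hx ⊢
      exact ⟨hx.1, by rw [hx.2]; decide⟩
    have hOnn : 0 ≤ ∑ w ∈ (C v).filter (fun w => Odd (wt w)), (wt w : ℤ) * ((wt w : ℤ) - 1) := by
      apply Finset.sum_nonneg
      intro w hw
      have := hwt2 w
      have : (2 : ℤ) ≤ (wt w : ℤ) := by exact_mod_cast this
      nlinarith
    -- l' + r + s + #L ≤ wt v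
    have hA : l' v + r v + s v + ((C v).filter (fun w => wt w = 2)).card ≤ wt v := by
      have h1 : ((C v).filter (fun w => wt w = 2)).card ≤ (C v).card := card_le_card (filter_subset _ _)
      omega
    intro heq
    have hwv : (4 : ℤ) ≤ (wt v : ℤ) := by exact_mod_cast h4
    have hAZ : (l' v : ℤ) + r v + s v + (((C v).filter (fun w => wt w = 2)).card : ℤ) ≤ (wt v : ℤ) := by
      exact_mod_cast hA
    have hlv : (l v : ℤ) = l' v + r v := by rw [hl]; push_cast; ring
    rw [hD''v, hD'v, hdsplit] at heq
    nlinarith [heq, hAZ, hOnn, hwv]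
  · -- wt v ∈ {2, 3}
    have h23 : wt v = 2 ∨ wt v = 3 := by have := hwt2 v; omega
    by_cases hCe : C v = ∅
    · -- leaf
      have hsum0 : ∑ w ∈ C v, wt w = 0 := by rw [hCe]; simp
      have hl'v : l' v = wt v := by omega
      have hr0 : r v = 0 := by rw [hr, hCe]; simp
      have hs0 : s v = 0 := by rw [hs, hCe]; simp
      have hlv : l v = wt v := by rw [hl]; omega
      have hdv : d v = 0 := by rw [hd, hCe]; simp
      have hse : (∑ w ∈ (C v).filter (fun w => Even (wt w)), (wt w : ℤ) * ((wt w : ℤ) - 1)) = 0 := by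
        rw [hCe]; simp
      rcases h23 with h2 | h3
      · have hD''v := hD''_oddleaf v hv hCe h2
        rw [hD''v, hD'v, hse, hdv, hlv, hs0, h2]
        norm_num
      · have hD''v := hD''_oddbig v hv (by omega)
        rw [hD''v, hD'v, hse, hdv, hlv, hs0, h3, hCe]
        norm_num [hr0, h3]
    · -- one child
      have hcard1 : (C v).card = 1 := by
        have h1 : 1 ≤ (C v).card := card_pos.mpr (nonempty_iff_ne_empty.mpr hCe)
        omega
      obtain ⟨w, hw⟩ := card_eq_one.mp hcard1
      have hwC : w ∈ C v := by rw [hw]; simp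
      have hsumw : ∑ x ∈ C v, wt x = wt w := by rw [hw]; simp
      have hww : wt w = 2 ∨ wt w = 3 := by have := hwt2 w; omega
      rcases hww with hw2 | hw3
      · -- child of weight 2
        have hl' : l' v = wt v - 2 := by omega
        have hr0 : r v = 0 := by rw [hr, hw, filter_singleton]; simp [hw2]
        have hs1 : s v = 1 := by rw [hs, hw, filter_singleton]; simp [hw2]
        have hse : (∑ x ∈ (C v).filter (fun x => Even (wt x)), (wt x : ℤ) * ((wt x : ℤ) - 1)) = 2 := by
          rw [hw, filter_singleton]; simp [hw2]
        have hL1 : ((C v).filter (fun x => wt x = 2)).card = 1 := by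
          rw [hw, filter_singleton]; simp [hw2]
        have hdv : d v = 2 := by rw [hd, hw]; norm_num [hw2]
        rcases h23 with h2 | h3
        · have hD''v := hD''_oddmid v hv hCe h2
          have hlv : l v = 0 := by rw [hl]; omega
          rw [hD''v, hD'v, hse, hdv, hlv, hs1, h2]
          norm_num
        · have hD''v := hD''_oddbig v hv (by omega)
          have hlv : l v = 1 := by rw [hl]; omega
          rw [hD''v, hD'v, hse, hdv, hlv, hs1, h3, hL1]
          norm_num [hr0, h3]
      · -- child of weight 3, wt v must be 3, l' = 0
        have h3 : wt v = 3 := by omega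
        have hr1 : r v = 1 := by rw [hr, hw, filter_singleton]; simp [hw3, Nat.odd_iff]
        have hs0 : s v = 0 := by rw [hs, hw, filter_singleton]; simp [hw3, Nat.even_iff]
        have hse : (∑ x ∈ (C v).filter (fun x => Even (wt x)), (wt x : ℤ) * ((wt x : ℤ) - 1)) = 0 := by
          rw [hw, filter_singleton]
          simp [hw3, Nat.even_iff]
        have hL0 : ((C v).filter (fun x => wt x = 2)).card = 0 := by
          rw [hw, filter_singleton]; simp [hw3]
        have hdv : d v = 6 := by rw [hd, hw]; norm_num [hw3]
        have hD''v := hD''_oddbig v hv (by omega)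
        have hlv : l v = 1 := by rw [hl]; omega
        rw [hD''v, hD'v, hse, hdv, hlv, hs0, h3, hL0]
        norm_num [hr1, h3]
end

section
/- Assume additionally that the weight of the root of T is even and at least 4. Then Σ_{v ∈ V} (D'(v) − E(v)) ≤ Σ_{v ∈ V} d(v); in particular, Σ_{v ∈ V} D'(v) ≤ Σ_{v ∈ V} d(v). -/
/-!
Both inequalities are proved by telescoping along the tree. For a potential `g : V → ℤ`
vanishing at the root, the coboundary `δg(v) = ∑_{w ∈ C(v)} g(w) - g(v)` sums to zero over `V`,
since every non-root vertex is the child of exactly one vertex.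

`E` is such a coboundary, for `g(v) = [v odd] (wt_v (wt_v - 1) - 2) + [p_v odd]`; as the root has
even weight, `g(root) = 0` and `∑ E = 0`, so the two inequalities are equivalent. For the second,
`d - D' ≥ δφ` with `φ(v) = [v odd] wt_v (3 - wt_v)`: the term `-φ(v)` cancels the
`wt_v (wt_v - 1)` in `D'(v)` of an odd vertex, and what remains is a sum of one elementary
inequality per child, true because every weight is at least `2` and every odd weight at least `3`.
-/

open Finset

section Telescoping

variable {V : Type*} [Fintype V] [DecidableEq V] {root : V} {parent : V → V}
  {C : V → Finset V} {M : Type*} [AddCommGroup M]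

theorem sum_sum_children_eq_sum_sub_root (hC : ∀ v w, w ∈ C v ↔ w ≠ root ∧ parent w = v)
    (f : V → M) : ∑ v, ∑ w ∈ C v, f w = ∑ v, f v - f root := by
  rw [← sum_erase_eq_sub (mem_univ root),
    ← sum_fiberwise_of_maps_to (s := univ.erase root) (t := univ) (g := parent)
      fun _ _ => mem_univ _]
  refine sum_congr rfl fun v _ => sum_congr ?_ fun _ _ => rfl
  ext w
  simp [hC, and_comm]

theorem sum_eq_zero_of_eq_sum_children_sub (hC : ∀ v w, w ∈ C v ↔ w ≠ root ∧ parent w = v)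
    {F g : V → M} (hg : g root = 0) (hF : ∀ v, F v = ∑ w ∈ C v, g w - g v) :
    ∑ v, F v = 0 := by
  simp_rw [hF, sum_sub_distrib, sum_sum_children_eq_sum_sub_root hC, hg, sub_zero, sub_self]

theorem sum_nonneg_of_sum_children_sub_le [PartialOrder M] [IsOrderedAddMonoid M]
    (hC : ∀ v w, w ∈ C v ↔ w ≠ root ∧ parent w = v)
    {F g : V → M} (hg : g root = 0) (hF : ∀ v, ∑ w ∈ C v, g w - g v ≤ F v) :
    0 ≤ ∑ v, F v :=
  calc 0 = ∑ v, (∑ w ∈ C v, g w - g v) :=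
        (sum_eq_zero_of_eq_sum_children_sub hC hg fun _ => rfl).symm
    _ ≤ ∑ v, F v := sum_le_sum fun v _ => hF v

end Telescoping

section LocalBounds

variable {V : Type*} {ε : V → ZMod 2} {wt : V → ℕ} {c : Finset V} {v : V}

def gapPotential (ε : V → ZMod 2) (wt : V → ℕ) (v : V) : ℤ :=
  if ε v = 1 then (wt v : ℤ) * (3 - wt v) else 0

-- `ε v + wt v` is the parity of the parent of `v`, and `0` at the root.
def ePotential (ε : V → ZMod 2) (wt : V → ℕ) (v : V) : ℤ :=
  (if ε v = 1 then (wt v : ℤ) * (wt v - 1) - 2 else 0) + if ε v + wt v = 1 then 1 else 0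

theorem filter_eq_one_eq_filter_not_even (hv : ε v = 0) (hc : ∀ w ∈ c, ε w = ε v + wt w) :
    c.filter (fun w => ε w = 1) = c.filter (fun w => ¬ Even (wt w)) :=
  filter_congr fun w hw => by
    rw [hc w hw, hv, zero_add, ZMod.natCast_eq_one_iff_odd, Nat.not_even_iff_odd]

theorem filter_eq_one_eq_filter_even (hv : ε v = 1) (hc : ∀ w ∈ c, ε w = ε v + wt w) :
    c.filter (fun w => ε w = 1) = c.filter (fun w => Even (wt w)) :=
  filter_congr fun w hw => by
    rw [hc w hw, hv, add_eq_left, ZMod.natCast_eq_zero_iff_even]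

theorem mod_two_eq_of_sum_children {l' r l n : ℕ} (hn : n = l' + ∑ w ∈ c, wt w)
    (hr : r = #(c.filter fun w => Odd (wt w))) (hl : l = l' + r) : l % 2 = n % 2 := by
  have h := even_sum_iff_even_card_odd (s := c) wt
  rw [← hr, Nat.even_iff, Nat.even_iff] at h
  omega

theorem card_eq_card_filter_even_add_card_filter_odd (c : Finset V) (wt : V → ℕ) :
    #c = #(c.filter fun w => Even (wt w)) + #(c.filter fun w => Odd (wt w)) := by
  rw [← card_filter_add_card_filter_not (fun w => Even (wt w))]
  simp only [Nat.not_even_iff_odd]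

theorem sum_gapPotential_sub_le_of_even (hv : ε v = 0) (hc : ∀ w ∈ c, ε w = ε v + wt w)
    (hwt2 : ∀ w ∈ c, 2 ≤ wt w) {s : ℕ} (hs : s = #(c.filter fun w => Even (wt w))) {D' : ℤ}
    (hD' : D' = 2 * s + ∑ w ∈ c.filter (fun w => ε w = 1), (wt w : ℤ) * (wt w - 1)) :
    ∑ w ∈ c, gapPotential ε wt w - gapPotential ε wt v ≤
      ∑ w ∈ c, (wt w : ℤ) * (wt w - 1) - D' := by
  have hchild : ∀ w ∈ c, gapPotential ε wt w ≤
      if Even (wt w) then (wt w : ℤ) * (wt w - 1) - 2 else 0 := by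
    intro w hw
    have h2 : (2 : ℤ) ≤ wt w := by exact_mod_cast hwt2 w hw
    rcases Nat.even_or_odd (wt w) with h | h
    · have hεw : ε w = 0 := by rw [hc w hw, hv, h.natCast_zmod_two, add_zero]
      simp only [gapPotential, hεw, if_pos h, zero_ne_one, if_false]
      nlinarith
    · have hεw : ε w = 1 := by rw [hc w hw, hv, h.natCast_zmod_two, zero_add]
      have h3 : (3 : ℤ) ≤ wt w := by have := Nat.odd_iff.mp h; have := hwt2 w hw; omega
      simp only [gapPotential, hεw, if_true, if_neg (Nat.not_even_iff_odd.2 h)]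
      nlinarith
  have hsum := sum_le_sum hchild
  rw [← sum_filter, sum_sub_distrib, sum_const, ← hs, nsmul_eq_mul] at hsum
  have hsplit := sum_filter_add_sum_filter_not c (fun w => Even (wt w))
    fun w => (wt w : ℤ) * (wt w - 1)
  rw [hD', filter_eq_one_eq_filter_not_even hv hc, gapPotential, if_neg (by simp [hv])]
  linarith

theorem sum_gapPotential_sub_le_of_odd (hv : ε v = 1) (hc : ∀ w ∈ c, ε w = ε v + wt w)
    (hwt2 : ∀ w ∈ c, 2 ≤ wt w) {l' r s l : ℕ} (hwt : wt v = l' + ∑ w ∈ c, wt w)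
    (hr : r = #(c.filter fun w => Odd (wt w))) (hs : s = #(c.filter fun w => Even (wt w)))
    (hl : l = l' + r) {D' : ℤ}
    (hD' : D' = 2 * ((l : ℤ) + s) - (wt v : ℤ) * (wt v - 1) +
      ∑ w ∈ c.filter (fun w => ε w = 1), (wt w : ℤ) * (wt w - 1)) :
    ∑ w ∈ c, gapPotential ε wt w - gapPotential ε wt v ≤
      ∑ w ∈ c, (wt w : ℤ) * (wt w - 1) - D' := by
  have hchild : ∀ w ∈ c, gapPotential ε wt w ≤
      (if ¬ Even (wt w) then (wt w : ℤ) * (wt w - 1) else 0) + (2 * wt w - 2) := by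
    intro w hw
    have h2 : (2 : ℤ) ≤ wt w := by exact_mod_cast hwt2 w hw
    rcases Nat.even_or_odd (wt w) with h | h
    · have hεw : ε w = 1 := by rw [hc w hw, hv, h.natCast_zmod_two, add_zero]
      simp only [gapPotential, hεw, if_true, not_true_eq_false, h, if_false]
      nlinarith
    · have hεw : ε w = 0 := by rw [hc w hw, hv, h.natCast_zmod_two]; rfl
      simp only [gapPotential, hεw, zero_ne_one, if_false, if_pos (Nat.not_even_iff_odd.2 h)]
      nlinarith
  have hsum := sum_le_sum hchild
  rw [sum_add_distrib, ← sum_filter, sum_sub_distrib, ← mul_sum, sum_const, nsmul_eq_mul] at hsum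
  have hcard : #c = s + r := by rw [hs, hr, card_eq_card_filter_even_add_card_filter_odd]
  have hsplit := sum_filter_add_sum_filter_not c (fun w => Even (wt w))
    fun w => (wt w : ℤ) * (wt w - 1)
  have hwtz : (wt v : ℤ) = l' + ∑ w ∈ c, (wt w : ℤ) := by rw [hwt]; push_cast; rfl
  rw [hcard] at hsum
  rw [hD', filter_eq_one_eq_filter_even hv hc, gapPotential, if_pos hv, hl]
  push_cast at hsum ⊢
  linarith

theorem eq_sum_ePotential_sub_of_even (hv : ε v = 0) (hc : ∀ w ∈ c, ε w = ε v + wt w)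
    {l' r l : ℕ} (hwt : wt v = l' + ∑ w ∈ c, wt w) (hr : r = #(c.filter fun w => Odd (wt w)))
    (hl : l = l' + r) {E : ℤ}
    (hE : E = -((l % 2 : ℕ) : ℤ) -
      ∑ w ∈ c.filter (fun w => ε w = 1), (2 - (wt w : ℤ) * (wt w - 1))) :
    E = ∑ w ∈ c, ePotential ε wt w - ePotential ε wt v := by
  have hchild : ∀ w ∈ c, ePotential ε wt w =
      if ¬ Even (wt w) then (wt w : ℤ) * (wt w - 1) - 2 else 0 := by
    intro w hw
    rcases Nat.even_or_odd (wt w) with h | h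
    · have hεw : ε w = 0 := by rw [hc w hw, hv, h.natCast_zmod_two, add_zero]
      simp [ePotential, hεw, h.natCast_zmod_two, h]
    · have hεw : ε w = 1 := by rw [hc w hw, hv, h.natCast_zmod_two, zero_add]
      simp [ePotential, hεw, h.natCast_zmod_two, Nat.not_even_iff_odd.2 h]
  have hself : ePotential ε wt v = ((wt v % 2 : ℕ) : ℤ) := by
    rcases Nat.even_or_odd (wt v) with h | h
    · simp [ePotential, hv, h.natCast_zmod_two, Nat.even_iff.1 h]
    · simp [ePotential, hv, h.natCast_zmod_two, Nat.odd_iff.1 h]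
  rw [sum_congr rfl hchild, ← sum_filter, hself, ← mod_two_eq_of_sum_children hwt hr hl, hE,
    filter_eq_one_eq_filter_not_even hv hc, sum_sub_distrib, sum_sub_distrib]
  ring

theorem eq_sum_ePotential_sub_of_odd {p : ZMod 2} (hv : ε v = 1) (hp : ε v = p + wt v)
    (hc : ∀ w ∈ c, ε w = ε v + wt w) {r s : ℕ} (hr : r = #(c.filter fun w => Odd (wt w)))
    (hs : s = #(c.filter fun w => Even (wt w))) {E : ℤ}
    (hE₀ : p = 0 → E = r + s + 2 - (wt v : ℤ) * (wt v - 1) -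
      ∑ w ∈ c.filter (fun w => ε w = 1), (2 - (wt w : ℤ) * (wt w - 1)))
    (hE₁ : p = 1 → E = r + s + 1 - (wt v : ℤ) * (wt v - 1) -
      ∑ w ∈ c.filter (fun w => ε w = 1), (2 - (wt w : ℤ) * (wt w - 1))) :
    E = ∑ w ∈ c, ePotential ε wt w - ePotential ε wt v := by
  have hchild : ∀ w ∈ c, ePotential ε wt w =
      (if Even (wt w) then (wt w : ℤ) * (wt w - 1) - 2 else 0) + 1 := by
    intro w hw
    rcases Nat.even_or_odd (wt w) with h | h
    · have hεw : ε w = 1 := by rw [hc w hw, hv, h.natCast_zmod_two, add_zero]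
      simp [ePotential, hεw, h.natCast_zmod_two, h]
    · have hεw : ε w = 0 := by rw [hc w hw, hv, h.natCast_zmod_two]; rfl
      simp [ePotential, hεw, h.natCast_zmod_two, Nat.not_even_iff_odd.2 h]
  have hcard : #c = s + r := by rw [hs, hr, card_eq_card_filter_even_add_card_filter_odd]
  rw [filter_eq_one_eq_filter_even hv hc, sum_sub_distrib, sum_const, ← hs] at hE₀ hE₁
  rw [sum_congr rfl hchild, sum_add_distrib, ← sum_filter, sum_sub_distrib, sum_const, ← hs,
    sum_const, hcard]
  rcases Nat.even_or_odd (wt v) with h | h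
  · have hp1 : p = 1 := by rw [hv, h.natCast_zmod_two, add_zero] at hp; exact hp.symm
    rw [hE₁ hp1, ePotential, hv, h.natCast_zmod_two, if_pos rfl, add_zero, if_pos rfl,
      nsmul_eq_mul]
    ring
  · have hp0 : p = 0 := by rw [hv, h.natCast_zmod_two] at hp; exact add_eq_right.1 hp.symm
    rw [hE₀ hp0, ePotential, hv, h.natCast_zmod_two, if_pos rfl, if_neg (by decide),
      nsmul_eq_mul]
    ring

end LocalBounds

theorem stmt_13_general
    (V : Type) [Fintype V] [DecidableEq V]
    (root : V) (parent : V → V)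
    (C : V → Finset V)
    (hC : ∀ v w, w ∈ C v ↔ w ≠ root ∧ parent w = v)
    (l' wt : V → ℕ)
    (hwt : ∀ v, wt v = l' v + ∑ w ∈ C v, wt w)
    (hwt2 : ∀ v, 2 ≤ wt v)
    (r s l : V → ℕ)
    (hr : ∀ v, r v = ((C v).filter fun w => Odd (wt w)).card)
    (hs : ∀ v, s v = ((C v).filter fun w => Even (wt w)).card)
    (hl : ∀ v, l v = l' v + r v)
    (ε : V → ZMod 2)
    (hεroot : ε root = 0)
    (hε : ∀ w, w ≠ root → ε w = ε (parent w) + (wt w : ZMod 2))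
    (d : V → ℤ)
    (hd : ∀ v, d v = ∑ w ∈ C v, (wt w : ℤ) * ((wt w : ℤ) - 1))
    (D' : V → ℤ)
    (hD'_even : ∀ v, ε v = 0 → D' v =
      2 * (s v : ℤ) + ∑ w ∈ (C v).filter (fun w => ε w = 1), (wt w : ℤ) * ((wt w : ℤ) - 1))
    (hD'_odd : ∀ v, ε v = 1 → D' v =
      2 * ((l v : ℤ) + (s v : ℤ)) - (wt v : ℤ) * ((wt v : ℤ) - 1) +
        ∑ w ∈ (C v).filter (fun w => ε w = 1), (wt w : ℤ) * ((wt w : ℤ) - 1))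
    (E : V → ℤ)
    (hE_even : ∀ v, ε v = 0 → E v =
      -((l v % 2 : ℕ) : ℤ) -
        ∑ w ∈ (C v).filter (fun w => ε w = 1), (2 - (wt w : ℤ) * ((wt w : ℤ) - 1)))
    (hE_odd_evenpar : ∀ v, ε v = 1 → ε (parent v) = 0 → E v =
      (r v : ℤ) + (s v : ℤ) + 2 - (wt v : ℤ) * ((wt v : ℤ) - 1) -
        ∑ w ∈ (C v).filter (fun w => ε w = 1), (2 - (wt w : ℤ) * ((wt w : ℤ) - 1)))
    (hE_odd_oddpar : ∀ v, ε v = 1 → ε (parent v) = 1 → E v =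
      (r v : ℤ) + (s v : ℤ) + 1 - (wt v : ℤ) * ((wt v : ℤ) - 1) -
        ∑ w ∈ (C v).filter (fun w => ε w = 1), (2 - (wt w : ℤ) * ((wt w : ℤ) - 1)))
    (hrootwt_even : Even (wt root)) :
    (∑ v, (D' v - E v)) ≤ ∑ v, d v ∧ (∑ v, D' v) ≤ ∑ v, d v := by
  have hεchild : ∀ v, ∀ w ∈ C v, ε w = ε v + wt w := fun v w hw => by
    obtain ⟨hwroot, rfl⟩ := (hC v w).1 hw
    exact hε w hwroot
  have hparity : ∀ x : ZMod 2, x = 0 ∨ x = 1 := by decide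
  have hD : 0 ≤ ∑ v, (d v - D' v) := by
    refine sum_nonneg_of_sum_children_sub_le hC (g := gapPotential ε wt)
      (by simp [gapPotential, hεroot]) fun v => ?_
    rw [hd v]
    rcases hparity (ε v) with hv | hv
    · exact sum_gapPotential_sub_le_of_even hv (hεchild v) (fun w _ => hwt2 w) (hs v)
        (hD'_even v hv)
    · exact sum_gapPotential_sub_le_of_odd hv (hεchild v) (fun w _ => hwt2 w) (hwt v) (hr v)
        (hs v) (hl v) (hD'_odd v hv)
  have hE : ∑ v, E v = 0 := by
    refine sum_eq_zero_of_eq_sum_children_sub hC (g := ePotential ε wt)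
      (by simp [ePotential, hεroot, hrootwt_even.natCast_zmod_two]) fun v => ?_
    rcases hparity (ε v) with hv | hv
    · exact eq_sum_ePotential_sub_of_even hv (hεchild v) (hwt v) (hr v) (hl v) (hE_even v hv)
    · have hvroot : v ≠ root := by rintro rfl; simp [hεroot] at hv
      exact eq_sum_ePotential_sub_of_odd hv (hε v hvroot) (hεchild v) (hr v) (hs v)
        (hE_odd_evenpar v hv) (hE_odd_oddpar v hv)
  rw [sum_sub_distrib] at hD ⊢
  exact ⟨by linarith, by linarith⟩

theorem stmt_13
    (V : Type) [Fintype V] [DecidableEq V]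
    (root : V) (parent : V → V) (depth : V → ℕ)
    (hdepth_root : depth root = 0)
    (hdepth : ∀ v, v ≠ root → depth v = depth (parent v) + 1)
    (C : V → Finset V)
    (hC : ∀ v w, w ∈ C v ↔ w ≠ root ∧ parent w = v)
    (l' wt : V → ℕ)
    (hwt : ∀ v, wt v = l' v + ∑ w ∈ C v, wt w)
    (hwt2 : ∀ v, 2 ≤ wt v)
    (r s l : V → ℕ)
    (hr : ∀ v, r v = ((C v).filter fun w => Odd (wt w)).card)
    (hs : ∀ v, s v = ((C v).filter fun w => Even (wt w)).card)
    (hl : ∀ v, l v = l' v + r v)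
    (ε : V → ZMod 2)
    (hεroot : ε root = 0)
    (hε : ∀ w, w ≠ root → ε w = ε (parent w) + (wt w : ZMod 2))
    (d : V → ℤ)
    (hd : ∀ v, d v = ∑ w ∈ C v, (wt w : ℤ) * ((wt w : ℤ) - 1))
    (D' : V → ℤ)
    (hD'_even : ∀ v, ε v = 0 → D' v =
      2 * (s v : ℤ) + ∑ w ∈ (C v).filter (fun w => ε w = 1), (wt w : ℤ) * ((wt w : ℤ) - 1))
    (hD'_odd : ∀ v, ε v = 1 → D' v =
      2 * ((l v : ℤ) + (s v : ℤ)) - (wt v : ℤ) * ((wt v : ℤ) - 1) +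
        ∑ w ∈ (C v).filter (fun w => ε w = 1), (wt w : ℤ) * ((wt w : ℤ) - 1))
    (E : V → ℤ)
    (hE_even : ∀ v, ε v = 0 → E v =
      -((l v % 2 : ℕ) : ℤ) -
        ∑ w ∈ (C v).filter (fun w => ε w = 1), (2 - (wt w : ℤ) * ((wt w : ℤ) - 1)))
    (hE_odd_evenpar : ∀ v, ε v = 1 → ε (parent v) = 0 → E v =
      (r v : ℤ) + (s v : ℤ) + 2 - (wt v : ℤ) * ((wt v : ℤ) - 1) -
        ∑ w ∈ (C v).filter (fun w => ε w = 1), (2 - (wt w : ℤ) * ((wt w : ℤ) - 1)))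
    (hE_odd_oddpar : ∀ v, ε v = 1 → ε (parent v) = 1 → E v =
      (r v : ℤ) + (s v : ℤ) + 1 - (wt v : ℤ) * ((wt v : ℤ) - 1) -
        ∑ w ∈ (C v).filter (fun w => ε w = 1), (2 - (wt w : ℤ) * ((wt w : ℤ) - 1)))
    (hrootwt_even : Even (wt root)) (hrootwt4 : 4 ≤ wt root) :
    (∑ v, (D' v - E v)) ≤ ∑ v, d v ∧ (∑ v, D' v) ≤ ∑ v, d v :=
  stmt_13_general V root parent C hC l' wt hwt hwt2 r s l hr hs hl ε hεroot hε d hd D' hD'_even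
    hD'_odd E hE_even hE_odd_evenpar hE_odd_oddpar hrootwt_even
end

section
/- Let n ≥ 1 and let b_1, …, b_n be pairwise distinct elements of R. For a ∈ k, let wt_a = #{i : b_i ≡ a (mod t)} (only finitely many a ∈ k have wt_a ≠ 0). Then ν(∏_{(i,j) : i ≠ j} (b_i − b_j)) = Σ_{a ∈ k} wt_a(wt_a − 1) + Σ_{(i,j) : i ≠ j, b_i ≡ b_j (mod t)} ν((b_i − b_j)/t), where for b_i ≡ b_j (mod t) the element (b_i − b_j)/t lies in R, and both products/sums over (i,j) run over ordered pairs of distinct indices. -/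
/-!
Factor every `b i - b j` as `t ^ ν (b i - b j)` times a unit. The valuation of the product is
the sum of the valuations of its factors. A factor with `b i ≢ b j (mod t)` contributes `0`, and
one with `b i ≡ b j (mod t)` equals `t * c i j`, contributing `1 + ν (c i j)`. Counting the
ordered pairs of distinct indices in each residue class, `wt_a (wt_a - 1)` of them, gives the first
sum.
-/

section Valuation

variable {M : Type*} [CommMonoidWithZero M] {t : M} {ν : M → ℕ}

theorem valuation_eq_zero_of_not_dvd (hν : ∀ x : M, x ≠ 0 → Associated (t ^ ν x) x) {x : M}
    (hx : x ≠ 0) (h : ¬t ∣ x) : ν x = 0 := by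
  by_contra hne
  exact h ((dvd_pow_self t hne).trans (hν x hx).dvd)

variable [IsCancelMulZero M]

theorem Irreducible.eq_of_associated_pow (ht : Irreducible t) {m n : ℕ}
    (h : Associated (t ^ m) (t ^ n)) : m = n :=
  le_antisymm ((pow_dvd_pow_iff ht.ne_zero ht.not_isUnit).mp h.dvd)
    ((pow_dvd_pow_iff ht.ne_zero ht.not_isUnit).mp h.symm.dvd)

variable (ht : Irreducible t) (hν : ∀ x : M, x ≠ 0 → Associated (t ^ ν x) x)
include ht hν

theorem valuation_mul {x y : M} (hx : x ≠ 0) (hy : y ≠ 0) : ν (x * y) = ν x + ν y := by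
  refine ht.eq_of_associated_pow ((hν _ (mul_ne_zero hx hy)).trans ?_)
  rw [pow_add]
  exact ((hν x hx).mul_mul (hν y hy)).symm

theorem valuation_prod {ι : Type*} (s : Finset ι) (f : ι → M) (hf : ∀ i ∈ s, f i ≠ 0) :
    ν (∏ i ∈ s, f i) = ∑ i ∈ s, ν (f i) := by
  have : Nontrivial M := ⟨t, 0, ht.ne_zero⟩
  induction s using Finset.cons_induction with
  | empty => simpa using ht.eq_of_associated_pow (n := 0) (by simpa using hν 1 one_ne_zero)
  | cons a s ha ih =>
    rw [Finset.prod_cons, Finset.sum_cons, valuation_mul ht hν (hf a (Finset.mem_cons_self a s))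
      (Finset.prod_ne_zero_iff.mpr fun i hi => hf i (Finset.mem_cons_of_mem hi)),
      ih fun i hi => hf i (Finset.mem_cons_of_mem hi)]

theorem valuation_uniformizer_mul {x : M} (hx : x ≠ 0) : ν (t * x) = 1 + ν x := by
  rw [valuation_mul ht hν ht.ne_zero hx,
    ht.eq_of_associated_pow (m := ν t) (n := 1) (by simpa using hν t ht.ne_zero)]

end Valuation

open Finset in
theorem card_ne_and_eq_eq_sum_mul_pred {ι β : Type*} [Fintype ι] [DecidableEq ι]
    [DecidableEq β] (f : ι → β) :
    #{p : ι × ι | p.1 ≠ p.2 ∧ f p.1 = f p.2}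
      = ∑ a ∈ univ.image f, #{i | f i = a} * (#{i | f i = a} - 1) := by
  rw [card_eq_sum_card_fiberwise (f := fun p : ι × ι => f p.1) (t := univ.image f)
    fun p _ => mem_image_of_mem f (mem_univ p.1)]
  refine sum_congr rfl fun a _ => ?_
  have hfiber : ({p : ι × ι | p.1 ≠ p.2 ∧ f p.1 = f p.2} : Finset (ι × ι)).filter
      (fun p => f p.1 = a) = ({i | f i = a} : Finset ι).offDiag := by
    ext ⟨i, j⟩
    simp only [mem_filter, mem_offDiag, mem_univ, true_and]
    constructor
    · rintro ⟨⟨hij, hfij⟩, rfl⟩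
      exact ⟨rfl, hfij.symm, hij⟩
    · rintro ⟨rfl, hj, hij⟩
      exact ⟨⟨hij, hj.symm⟩, rfl⟩
  rw [hfiber, offDiag_card, Nat.mul_sub_one]

open scoped Classical in
theorem stmt_14_general
    (R : Type*) [CommRing R] [IsDomain R]
    (t : R) (ht : Irreducible t)
    (ν : R → ℕ) (hν : ∀ x : R, x ≠ 0 → Associated (t ^ ν x) x)
    (n : ℕ) (b : Fin n → R) (hb : Function.Injective b)
    (c : Fin n → Fin n → R)
    (hc : ∀ i j : Fin n,
      Ideal.Quotient.mk (Ideal.span {t}) (b i) = Ideal.Quotient.mk (Ideal.span {t}) (b j) →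
      b i - b j = t * c i j) :
    ν (∏ p ∈ Finset.univ.filter (fun p : Fin n × Fin n => p.1 ≠ p.2), (b p.1 - b p.2))
      = (∑ a ∈ Finset.univ.image (fun i : Fin n => Ideal.Quotient.mk (Ideal.span {t}) (b i)),
          (Finset.univ.filter
              (fun i : Fin n => Ideal.Quotient.mk (Ideal.span {t}) (b i) = a)).card *
          ((Finset.univ.filter
              (fun i : Fin n => Ideal.Quotient.mk (Ideal.span {t}) (b i) = a)).card - 1))
        + ∑ p ∈ Finset.univ.filter (fun p : Fin n × Fin n => p.1 ≠ p.2 ∧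
            Ideal.Quotient.mk (Ideal.span {t}) (b p.1)
              = Ideal.Quotient.mk (Ideal.span {t}) (b p.2)),
            ν (c p.1 p.2) := by
  set q : Fin n → R ⧸ Ideal.span {t} := fun i => Ideal.Quotient.mk (Ideal.span {t}) (b i)
  have hsub_ne : ∀ p : Fin n × Fin n, p.1 ≠ p.2 → b p.1 - b p.2 ≠ 0 :=
    fun p hp => sub_ne_zero.mpr (hb.ne hp)
  have hcongruent_of_ne_zero : ∀ p : Fin n × Fin n, p.1 ≠ p.2 →
      ν (b p.1 - b p.2) ≠ 0 → q p.1 = q p.2 := fun p hp hν0 => by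
    by_contra hq
    refine hν0 (valuation_eq_zero_of_not_dvd hν (hsub_ne p hp) ?_)
    rwa [← Ideal.mem_span_singleton, ← Ideal.Quotient.eq]
  have hcongruent : ∀ p : Fin n × Fin n, p.1 ≠ p.2 → q p.1 = q p.2 →
      ν (b p.1 - b p.2) = 1 + ν (c p.1 p.2) := fun p hp hq => by
    have hsub := hc p.1 p.2 hq
    rw [hsub]
    exact valuation_uniformizer_mul ht hν (right_ne_zero_of_mul (hsub ▸ hsub_ne p hp))
  rw [valuation_prod ht hν _ _ fun p hp => hsub_ne p (Finset.mem_filter.mp hp).2,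
    ← Finset.sum_filter_of_ne fun p hp => hcongruent_of_ne_zero p (Finset.mem_filter.mp hp).2,
    Finset.filter_filter, Finset.sum_congr rfl fun p hp =>
      hcongruent p (Finset.mem_filter.mp hp).2.1 (Finset.mem_filter.mp hp).2.2,
    Finset.sum_add_distrib, Finset.sum_const, smul_eq_mul, mul_one,
    card_ne_and_eq_eq_sum_mul_pred q]

open scoped Classical in
/-- decomposition of the valuation of the discriminant-type product
`∏_{i ≠ j} (b i - b j)` over a discrete valuation ring. -/
theorem stmt_14
    (R : Type*) [CommRing R] [IsDomain R] [IsDiscreteValuationRing R]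
    (t : R) (ht : Irreducible t)
    (ν : R → ℕ) (hν : ∀ x : R, x ≠ 0 → Associated (t ^ ν x) x)
    (n : ℕ) (hn : 1 ≤ n) (b : Fin n → R) (hb : Function.Injective b)
    (c : Fin n → Fin n → R)
    (hc : ∀ i j : Fin n,
      Ideal.Quotient.mk (Ideal.span {t}) (b i) = Ideal.Quotient.mk (Ideal.span {t}) (b j) →
      b i - b j = t * c i j) :
    ν (∏ p ∈ Finset.univ.filter (fun p : Fin n × Fin n => p.1 ≠ p.2), (b p.1 - b p.2))
      = (∑ a ∈ Finset.univ.image (fun i : Fin n => Ideal.Quotient.mk (Ideal.span {t}) (b i)),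
          (Finset.univ.filter
              (fun i : Fin n => Ideal.Quotient.mk (Ideal.span {t}) (b i) = a)).card *
          ((Finset.univ.filter
              (fun i : Fin n => Ideal.Quotient.mk (Ideal.span {t}) (b i) = a)).card - 1))
        + ∑ p ∈ Finset.univ.filter (fun p : Fin n × Fin n => p.1 ≠ p.2 ∧
            Ideal.Quotient.mk (Ideal.span {t}) (b p.1)
              = Ideal.Quotient.mk (Ideal.span {t}) (b p.2)),
            ν (c p.1 p.2) :=
  stmt_14_general R t ht ν hν n b hb c hc
end

section
/- Let (A, m) be a Noetherian local ring whose maximal ideal m is generated by two elements a and b, and let u be a unit of A. Set B = A[X]/(X² − a·u). Then B is a (Noetherian) local ring whose maximal ideal is generated by the images of X and b, and the Krull dimension of B equals the Krull dimension of A. In particular, if A has Krull dimension 2 (so that A is a 2-dimensional regular local ring), then B is a local ring of Krull dimension 2 whose maximal ideal is generated by two elements, i.e., B is regular. -/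
open Polynomial IsLocalRing

/-!
Put `c = a u ∈ 𝔪` and let `r` be the root of `X² - c` in `B`. Every element of `B` is
`x + y r` with `x, y ∈ A`, and `(x + y r)(x - y r) = x² - y² c`, so `x + y r` is a unit as
soon as `x` is. Hence the nonunits of `B` form the kernel of `B → A/𝔪`, `r ↦ 0`: `B` is
local with maximal ideal `𝔪 B + (r)`, which is `(r, b)` because `a = u⁻¹ r²`. Finally `B` is
free of rank `2` over `A`, hence an integral extension, and incomparability and going up give
`dim B = dim A`.
-/
theorem ringKrullDim_eq_of_isIntegral (R S : Type*) [CommRing R] [CommRing S] [Algebra R S]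
    [Algebra.IsIntegral R S] [FaithfulSMul R S] : ringKrullDim S = ringKrullDim R := by
  refine le_antisymm (Order.krullDim_le_of_strictMono (PrimeSpectrum.comap (algebraMap R S))
    fun P Q hPQ => Ideal.IsIntegral.comap_lt_comap (R := R) hPQ) (iSup_le fun l => ?_)
  obtain ⟨P⟩ := Ideal.nonempty_primesOver (S := S) l.head.asIdeal
  obtain ⟨L, hL, -⟩ := Ideal.exists_ltSeries_of_hasGoingUp l P.1 (lo := P.2.2)
  exact hL ▸ Order.LTSeries.length_le_krullDim L

namespace AdjoinRoot

variable {A : Type*} [CommRing A]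

theorem root_X_sq_sub_C_sq (c : A) : root (X ^ 2 - C c) ^ 2 = of (X ^ 2 - C c) c := by
  rw [← sub_eq_zero, ← mk_X, ← mk_C, ← map_pow, ← map_sub, mk_self]

theorem exists_eq_of_add_of_mul_root_X_sq_sub_C (c : A) (z : AdjoinRoot (X ^ 2 - C c)) :
    ∃ x y : A, z = of _ x + of _ y * root _ := by
  obtain ⟨p, rfl⟩ := mk_surjective z
  cases subsingleton_or_nontrivial A
  · exact ⟨0, 0, by simp [Subsingleton.elim p 0]⟩
  have hmon : (X ^ 2 - C c).Monic := monic_X_pow_sub_C c two_ne_zero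
  have hdeg : (X ^ 2 - C c).natDegree = 2 := natDegree_X_pow_sub_C
  have hq : (p %ₘ (X ^ 2 - C c)).natDegree ≤ 1 := by
    have := natDegree_modByMonic_lt p hmon (by rintro h; simp [h] at hdeg)
    omega
  rw [← mk_leftInverse hmon (mk _ p), modByMonicHom_mk]
  generalize p %ₘ (X ^ 2 - C c) = q at hq ⊢
  refine ⟨q.coeff 0, q.coeff 1, ?_⟩
  conv_lhs => rw [eq_X_add_C_of_natDegree_le_one hq]
  simp only [map_add, map_mul, mk_C, mk_X]
  ring

theorem of_injective_of_monic {f : A[X]} (hf : f.Monic) (hdeg : 0 < f.degree) :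
    Function.Injective (of f) :=
  (injective_iff_map_eq_zero _).mpr fun _ hx => by_contra fun hx0 =>
    mk_ne_zero_of_degree_lt hf (C_ne_zero.mpr hx0) (degree_C_le.trans_lt hdeg) hx

theorem ringKrullDim_eq_of_monic {f : A[X]} (hf : f.Monic) (hdeg : 0 < f.degree) :
    ringKrullDim (AdjoinRoot f) = ringKrullDim A :=
  have := hf.finite_adjoinRoot
  have := (faithfulSMul_iff_algebraMap_injective A (AdjoinRoot f)).mpr
    (of_injective_of_monic hf hdeg)
  ringKrullDim_eq_of_isIntegral A (AdjoinRoot f)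

theorem span_of_pair_sup_span_root {a u : A} (hu : IsUnit u) (b : A) :
    Ideal.span {of (X ^ 2 - C (a * u)) a, of _ b} ⊔ Ideal.span {root _} =
      Ideal.span {root _, of _ b} := by
  have ha : of (X ^ 2 - C (a * u)) a ∈ Ideal.span {root _} := by
    obtain ⟨v, hv⟩ := hu.exists_right_inv
    have : of (X ^ 2 - C (a * u)) a = of _ v * root _ ^ 2 := by
      rw [root_X_sq_sub_C_sq, ← map_mul]
      congr 1
      linear_combination (-a) * hv
    rw [this]
    exact Ideal.mul_mem_left _ _
      (Ideal.pow_mem_of_mem _ (Ideal.mem_span_singleton_self _) 2 two_pos)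
  rw [Ideal.span_insert, sup_right_comm,
    sup_eq_right.mpr ((Ideal.span_singleton_le_iff_mem _).mpr ha), ← Ideal.span_insert]

section IsLocalRing

variable [IsLocalRing A] {c : A}

theorem isUnit_of_add_mul_root_X_sq_sub_C (hc : c ∈ maximalIdeal A) {x : A} (hx : IsUnit x)
    (y : A) : IsUnit (of (X ^ 2 - C c) x + of _ y * root _) := by
  have hnorm : (of (X ^ 2 - C c) x + of _ y * root _) * (of _ x - of _ y * root _)
      = of _ (x ^ 2 - y ^ 2 * c) := by
    rw [map_sub, map_mul, map_pow, map_pow]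
    linear_combination (-(of (X ^ 2 - C c) y) ^ 2) * root_X_sq_sub_C_sq c
  have hunit : IsUnit (x ^ 2 - y ^ 2 * c) := by
    refine notMem_maximalIdeal.mp fun h => notMem_maximalIdeal.mpr (hx.pow 2) ?_
    have := add_mem h (Ideal.mul_mem_left _ (y ^ 2) hc)
    rwa [sub_add_cancel] at this
  exact isUnit_of_mul_isUnit_left (hnorm ▸ hunit.map _)

noncomputable def residueX_sq_sub_C (hc : c ∈ maximalIdeal A) :
    AdjoinRoot (X ^ 2 - C c) →+* ResidueField A :=
  lift (residue A) 0 <| by simpa [eval₂_sub, residue_eq_zero_iff] using hc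

@[simp]
theorem residueX_sq_sub_C_of (hc : c ∈ maximalIdeal A) (x : A) :
    residueX_sq_sub_C hc (of _ x) = residue A x :=
  lift_of _

@[simp]
theorem residueX_sq_sub_C_root (hc : c ∈ maximalIdeal A) :
    residueX_sq_sub_C hc (root _) = 0 :=
  lift_root _

theorem residueX_sq_sub_C_surjective (hc : c ∈ maximalIdeal A) :
    Function.Surjective (residueX_sq_sub_C hc) := fun k => by
  obtain ⟨x, rfl⟩ := residue_surjective k
  exact ⟨of _ x, residueX_sq_sub_C_of hc x⟩

theorem residueX_sq_sub_C_eq_zero_iff (hc : c ∈ maximalIdeal A) {z : AdjoinRoot (X ^ 2 - C c)} :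
    residueX_sq_sub_C hc z = 0 ↔ ¬IsUnit z := by
  refine ⟨fun hz hu => (hu.map _).ne_zero hz, fun hz => by_contra fun hz0 => hz ?_⟩
  obtain ⟨x, y, rfl⟩ := exists_eq_of_add_of_mul_root_X_sq_sub_C c z
  rw [map_add, map_mul, residueX_sq_sub_C_of, residueX_sq_sub_C_root, mul_zero, add_zero,
    ← ne_eq, residue_ne_zero_iff_isUnit] at hz0
  exact isUnit_of_add_mul_root_X_sq_sub_C hc hz0 y

theorem isLocalRing_X_sq_sub_C (hc : c ∈ maximalIdeal A) :
    IsLocalRing (AdjoinRoot (X ^ 2 - C c)) :=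
  have := (residueX_sq_sub_C hc).domain_nontrivial
  .of_nonunits_add fun a b ha hb => by
    rw [mem_nonunits_iff, ← residueX_sq_sub_C_eq_zero_iff hc] at ha hb ⊢
    rw [map_add, ha, hb, add_zero]

theorem maximalIdeal_X_sq_sub_C (hc : c ∈ maximalIdeal A) :
    @maximalIdeal _ _ (isLocalRing_X_sq_sub_C hc) =
      (maximalIdeal A).map (of (X ^ 2 - C c)) ⊔ Ideal.span {root _} := by
  have := isLocalRing_X_sq_sub_C hc
  rw [← ker_eq_maximalIdeal _ (residueX_sq_sub_C_surjective hc)]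
  refine le_antisymm (fun z hz => ?_) (sup_le ?_ ?_)
  · obtain ⟨x, y, rfl⟩ := exists_eq_of_add_of_mul_root_X_sq_sub_C c z
    rw [RingHom.mem_ker, map_add, map_mul, residueX_sq_sub_C_of, residueX_sq_sub_C_root, mul_zero,
      add_zero, residue_eq_zero_iff] at hz
    exact add_mem (Ideal.mem_sup_left (Ideal.mem_map_of_mem _ hz))
      (Ideal.mem_sup_right (Ideal.mul_mem_left _ _ (Ideal.mem_span_singleton_self _)))
  · rw [Ideal.map_le_iff_le_comap]
    intro x hx
    simpa [residue_eq_zero_iff] using hx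
  · simp [Ideal.span_le]

end IsLocalRing

end AdjoinRoot

/-- for a Noetherian local ring `(A, m)` with `m = (a, b)` and a unit `u`,
`B = A[X]/(X² - a·u)` is a Noetherian local ring whose maximal ideal is generated by the
images of `X` and `b`, and `dim B = dim A`; in particular if `dim A = 2` then `B` is
regular (its maximal ideal is generated by `dim B = 2` elements). -/
theorem stmt_17
    (A : Type*) [CommRing A] [IsLocalRing A] [IsNoetherianRing A]
    (a b : A) (hm : IsLocalRing.maximalIdeal A = Ideal.span {a, b})
    (u : A) (hu : IsUnit u) :
    IsNoetherianRing (AdjoinRoot ((Polynomial.X ^ 2 - Polynomial.C (a * u) : Polynomial A))) ∧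
    ∃ h : IsLocalRing (AdjoinRoot ((Polynomial.X ^ 2 - Polynomial.C (a * u) : Polynomial A))),
      @IsLocalRing.maximalIdeal _ _ h
          = Ideal.span {AdjoinRoot.root ((Polynomial.X ^ 2 - Polynomial.C (a * u) : Polynomial A)),
              algebraMap A (AdjoinRoot ((Polynomial.X ^ 2 - Polynomial.C (a * u) : Polynomial A))) b}
        ∧ ringKrullDim (AdjoinRoot ((Polynomial.X ^ 2 - Polynomial.C (a * u) : Polynomial A)))
            = ringKrullDim A := by
  have hau : a * u ∈ maximalIdeal A :=
    Ideal.mul_mem_right _ _ (hm ▸ Ideal.subset_span (Set.mem_insert a {b}))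
  refine ⟨inferInstance, AdjoinRoot.isLocalRing_X_sq_sub_C hau, ?_, ?_⟩
  · rw [AdjoinRoot.maximalIdeal_X_sq_sub_C hau, hm, Ideal.map_span, Set.image_pair,
      AdjoinRoot.algebraMap_eq, AdjoinRoot.span_of_pair_sup_span_root hu]
  · exact AdjoinRoot.ringKrullDim_eq_of_monic (monic_X_pow_sub_C _ two_ne_zero)
      (by rw [degree_X_pow_sub_C two_pos]; norm_num)
end
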